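/- arXiv:1001.1592 — 10 statements merged into one kernel-verified Lean document; each statement's English description precedes it below -/
import Mathlib

section
/- Let (σ, α) be a combinatorial map on a nonempty finite set H and let S ⊆ H be stable under α, with motion function θ. Then θ is a permutation of H, and: (a) for every s ∈ S, θ_{|S}(s) = σ_{|S}(α(s)) (that is, the restriction of θ to S equals σ_{|S}∘α_{|S}, the face-permutation of the submap induced by S); (b) for every h ∈ H∖S, θ_{|H∖S}(h) = φ_{|H∖S}(α(h)) where φ = σ∘α (that is, the restriction of θ to H∖S equals the face-permutation of the dual submap induced by H∖S). -/
/-- First-return restriction of `f` to `S`, viewed as a map on the whole set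
(acting as the identity outside `S`): for `x ∈ S`, it returns `f^[k] x` where
`k` is the least positive integer with `f^[k] x ∈ S` (if such `k` exists). -/
noncomputable def restrictFun {X : Type*} (f : X → X) (S : Set X) (x : X) : X := by
  classical
  exact if hx : x ∈ S ∧ ∃ k : ℕ, 0 < k ∧ f^[k] x ∈ S then f^[Nat.find hx.2] x else x

/-- The motion function of the spanned map `((σ,α),S)`. -/
noncomputable def motion {X : Type*} (σ α : Equiv.Perm X) (S : Set X) (h : X) : X := by
  classical
  exact if h ∈ S then σ (α h) else σ h

/-- `(σ,α)` is a combinatorial map: `α` is a fixed-point-free involution and the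
subgroup generated by `σ` and `α` acts transitively. -/
def IsCombMap {X : Type*} (σ α : Equiv.Perm X) : Prop :=
  (∀ h, α h ≠ h) ∧ (∀ h, α (α h) = h) ∧
    ∀ x y : X, ∃ g ∈ Subgroup.closure ({σ, α} : Set (Equiv.Perm X)), g x = y

/-- Key first-return comparison lemma: if `θ x = f y` and `θ` agrees with `f`
outside `T`, then the first returns to `T` of `θ` from `x` and of `f` from `y`
coincide. -/
lemma restrict_eq_aux {X : Type*} (θ f : X → X) (T : Set X) (x y : X)
    (hxT : x ∈ T) (hyT : y ∈ T) (hy : ∃ k : ℕ, 0 < k ∧ f^[k] y ∈ T)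
    (h1 : θ x = f y) (hout : ∀ z ∉ T, θ z = f z) :
    restrictFun θ T x = restrictFun f T y := by
  classical
  have key : ∀ k, 0 < k → (∀ j, 0 < j → j < k → f^[j] y ∉ T) → θ^[k] x = f^[k] y := by
    intro k
    induction k with
    | zero => intro h; exact absurd h (lt_irrefl 0)
    | succ k ih =>
      intro _ hj
      rcases Nat.eq_zero_or_pos k with hk | hk
      · subst hk; simpa using h1
      · have h2 : θ^[k] x = f^[k] y :=
          ih hk (fun j hj1 hj2 => hj j hj1 (hj2.trans (Nat.lt_succ_self k)))
        have h3 : f^[k] y ∉ T := hj k hk (Nat.lt_succ_self k)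
        rw [Function.iterate_succ_apply', h2, hout _ h3]
        exact (Function.iterate_succ_apply' f k y).symm
  have hk₀pos : 0 < Nat.find hy := (Nat.find_spec hy).1
  have hk₀mem : f^[Nat.find hy] y ∈ T := (Nat.find_spec hy).2
  have hmin : ∀ j, 0 < j → j < Nat.find hy → f^[j] y ∉ T := fun j hj1 hj2 hmem =>
    Nat.find_min hy hj2 ⟨hj1, hmem⟩
  have hθ : θ^[Nat.find hy] x = f^[Nat.find hy] y := key _ hk₀pos hmin
  have hx' : x ∈ T ∧ ∃ k : ℕ, 0 < k ∧ θ^[k] x ∈ T :=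
    ⟨hxT, ⟨Nat.find hy, hk₀pos, hθ ▸ hk₀mem⟩⟩
  have hy' : y ∈ T ∧ ∃ k : ℕ, 0 < k ∧ f^[k] y ∈ T := ⟨hyT, hy⟩
  unfold restrictFun
  rw [dif_pos hx', dif_pos hy']
  have e1 : Nat.find hx'.2 = Nat.find hy := by
    rw [Nat.find_eq_iff]
    refine ⟨⟨hk₀pos, hθ ▸ hk₀mem⟩, fun n hn hc => ?_⟩
    have hn0 : 0 < n := hc.1
    have : θ^[n] x = f^[n] y := key n hn0 (fun j hj1 hj2 => hmin j hj1 (hj2.trans hn))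
    exact hmin n hn0 hn (this ▸ hc.2)
  have e2 : Nat.find hy'.2 = Nat.find hy := by
    rw [Nat.find_eq_iff]
    exact ⟨⟨hk₀pos, hk₀mem⟩, fun n hn hc => Nat.find_min hy hn hc⟩
  rw [e1, e2]
  exact hθ

/-- the motion function of a spanned map is a permutation, its
restriction to `S` is the face-permutation `σ_{|S}∘α_{|S}` of the submap, and its
restriction to `H∖S` is the face-permutation `φ_{|H∖S}∘α_{|H∖S}` of the dual submap
(where `φ = σ∘α`). -/
theorem motion_is_perm_and_restrictions {H : Type*} [Fintype H] [Nonempty H]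
    (σ α : Equiv.Perm H) (hmap : IsCombMap σ α)
    (S : Set H) (hstab : ∀ s ∈ S, α s ∈ S) :
    Function.Bijective (motion σ α S) ∧
    (∀ s ∈ S, restrictFun (motion σ α S) S s = restrictFun (⇑σ) S (α s)) ∧
    (∀ h ∈ Sᶜ, restrictFun (motion σ α S) Sᶜ h = restrictFun (⇑(σ * α)) Sᶜ (α h)) := by
  classical
  have hαinv := hmap.2.1
  have hstabC : ∀ h ∈ Sᶜ, α h ∈ Sᶜ := by
    intro h hh hc
    exact hh (by rw [← hαinv h]; exact hstab _ hc)
  have hmot_in : ∀ z ∈ S, motion σ α S z = σ (α z) := by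
    intro z hz; unfold motion; rw [if_pos hz]
  have hmot_out : ∀ z ∉ S, motion σ α S z = σ z := by
    intro z hz; unfold motion; rw [if_neg hz]
  have hret : ∀ (f : Equiv.Perm H) (T : Set H) (y : H), y ∈ T →
      ∃ k : ℕ, 0 < k ∧ (⇑f)^[k] y ∈ T := by
    intro f T y hy
    refine ⟨orderOf f, orderOf_pos f, ?_⟩
    rw [Equiv.Perm.iterate_eq_pow, pow_orderOf_eq_one]
    simpa using hy
  refine ⟨?_, ?_, ?_⟩
  · rw [← Finite.injective_iff_bijective]
    intro a b hab
    by_cases ha : a ∈ S <;> by_cases hb : b ∈ S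
    · rw [hmot_in a ha, hmot_in b hb] at hab
      exact α.injective (σ.injective hab)
    · rw [hmot_in a ha, hmot_out b hb] at hab
      exact absurd (σ.injective hab ▸ hstab a ha) hb
    · rw [hmot_out a ha, hmot_in b hb] at hab
      exact absurd ((σ.injective hab).symm ▸ hstab b hb) ha
    · rw [hmot_out a ha, hmot_out b hb] at hab
      exact σ.injective hab
  · intro s hs
    exact restrict_eq_aux _ _ S s (α s) hs (hstab s hs) (hret σ S (α s) (hstab s hs))
      (hmot_in s hs) hmot_out
  · intro h hh
    refine restrict_eq_aux _ _ Sᶜ h (α h) hh (hstabC h hh) (hret (σ * α) Sᶜ (α h) (hstabC h hh))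
      ?_ ?_
    · rw [hmot_out h hh]
      simp [hαinv h]
    · intro z hz
      have hzS : z ∈ S := by simpa using hz
      rw [hmot_in z hzS]
      rfl
end

section
/- Let (σ, α) be a combinatorial map on a nonempty finite set H, let S ⊆ H be a nonempty subset stable under α, and let θ be the motion function of ((σ,α),S). Then θ is a cyclic permutation of H if and only if the following three conditions hold: (i) every orbit of σ on H meets S; (ii) the permutations σ_{|S} and α_{|S} of S generate a subgroup acting transitively on S; (iii) σ_{|S}∘α_{|S} is a cyclic permutation of S. (In the paper's terminology: a spanned map is a covered map — its induced submap is a connecting unicellular map — if and only if its motion function is a cyclic permutation.) -/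
noncomputable def phiFun {H : Type*} (σ α : Equiv.Perm H) (S : Set H) : H → H :=
  fun h => restrictFun (⇑σ) S (restrictFun (⇑α) S h)

attribute [local instance] Classical.propDecidable
set_option linter.unusedSectionVars false

section Aux
variable {H : Type*} [Fintype H] (σ α : Equiv.Perm H) (S : Set H)

lemma motion_of_mem {h : H} (hh : h ∈ S) : motion σ α S h = σ (α h) := by
  unfold motion; rw [if_pos hh]

lemma motion_of_notMem {h : H} (hh : h ∉ S) : motion σ α S h = σ h := by
  unfold motion; rw [if_neg hh]

lemma restrict_alpha (hstab : ∀ s ∈ S, α s ∈ S) {s : H} (hs : s ∈ S) :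
    restrictFun (⇑α) S s = α s := by
  have hmem : (⇑α)^[1] s ∈ S := by simpa using hstab s hs
  have hex : s ∈ S ∧ ∃ k : ℕ, 0 < k ∧ (⇑α)^[k] s ∈ S := ⟨hs, 1, one_pos, hmem⟩
  unfold restrictFun
  rw [dif_pos hex]
  have h1 : Nat.find hex.2 = 1 := by
    rw [Nat.find_eq_iff]
    refine ⟨⟨one_pos, hmem⟩, ?_⟩
    intro n hn
    interval_cases n
    simp
  rw [h1]; simp

lemma restrict_sigma_spec {s : H} (hs : s ∈ S) :
    ∃ k : ℕ, 0 < k ∧ (⇑σ)^[k] s ∈ S ∧ restrictFun (⇑σ) S s = (⇑σ)^[k] s ∧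
      ∀ j, 0 < j → j < k → (⇑σ)^[j] s ∉ S := by
  have hret : ∃ k : ℕ, 0 < k ∧ (⇑σ)^[k] s ∈ S := by
    refine ⟨orderOf σ, orderOf_pos σ, ?_⟩
    rw [Equiv.Perm.iterate_eq_pow, pow_orderOf_eq_one]
    simpa using hs
  have hex : s ∈ S ∧ ∃ k : ℕ, 0 < k ∧ (⇑σ)^[k] s ∈ S := ⟨hs, hret⟩
  refine ⟨Nat.find hex.2, (Nat.find_spec hex.2).1, (Nat.find_spec hex.2).2, ?_, ?_⟩
  · unfold restrictFun; rw [dif_pos hex]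
  · intro j hj hjk hmem
    exact Nat.find_min hex.2 hjk ⟨hj, hmem⟩

/-- As long as the σ-iterates stay outside S, motion agrees with σ. -/
lemma motion_iterate_eq_sigma (x : H) (n : ℕ) (hout : ∀ j < n, (⇑σ)^[j] x ∉ S) :
    (motion σ α S)^[n] x = (⇑σ)^[n] x := by
  induction n with
  | zero => rfl
  | succ n ih =>
    rw [Function.iterate_succ_apply', Function.iterate_succ_apply',
      ih (fun j hj => hout j (Nat.lt_succ_of_lt hj)),
      motion_of_notMem σ α S (hout n (Nat.lt_succ_self n))]

/-- If some σ-iterate of x lies in S, then some motion-iterate of x lies in S. -/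
lemma motion_escape (x : H) (hx : ∃ n : ℕ, (⇑σ)^[n] x ∈ S) :
    ∃ m : ℕ, (motion σ α S)^[m] x ∈ S := by
  classical
  refine ⟨Nat.find hx, ?_⟩
  rw [motion_iterate_eq_sigma σ α S x _ (fun j hj => Nat.find_min hx hj)]
  exact Nat.find_spec hx

/-- First return of the motion to S is σ_{|S} ∘ α_{|S}. -/
lemma motion_first_return (hstab : ∀ s ∈ S, α s ∈ S) {s : H} (hs : s ∈ S) :
    ∃ k : ℕ, 0 < k ∧
      (motion σ α S)^[k] s = phiFun σ α S s ∧
      phiFun σ α S s ∈ S ∧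
      ∀ j, 0 < j → j < k → (motion σ α S)^[j] s ∉ S := by
  have ht : α s ∈ S := hstab s hs
  obtain ⟨k, hk0, hkS, hkval, hkmin⟩ := restrict_sigma_spec σ S ht
  have key : ∀ j, 0 < j → j ≤ k → (motion σ α S)^[j] s = (⇑σ)^[j] (α s) := by
    intro j hj hjk
    induction j with
    | zero => exact absurd hj (lt_irrefl 0)
    | succ j ih =>
      rcases Nat.eq_zero_or_pos j with hj0 | hj0
      · subst hj0
        simpa using motion_of_mem σ α S hs
      · rw [Function.iterate_succ_apply', ih hj0 (Nat.le_of_succ_le hjk),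
          Function.iterate_succ_apply',
          motion_of_notMem σ α S (hkmin j hj0 (Nat.lt_of_succ_le hjk))]
  refine ⟨k, hk0, ?_, ?_, ?_⟩
  · rw [key k hk0 le_rfl, phiFun, restrict_alpha α S hstab hs, hkval]
  · rw [phiFun, restrict_alpha α S hstab hs, hkval]; exact hkS
  · intro j hj hjk
    rw [key j hj (le_of_lt hjk)]
    exact hkmin j hj hjk

end Aux

section Aux2
variable {H : Type*} [Fintype H] (σ α : Equiv.Perm H) (S : Set H)
  (hstab : ∀ s ∈ S, α s ∈ S)

include hstab


lemma phi_mem {s : H} (hs : s ∈ S) : phiFun σ α S s ∈ S :=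
  (motion_first_return σ α S hstab hs).choose_spec.2.2.1

lemma phi_iter_mem (n : ℕ) {s : H} (hs : s ∈ S) : (phiFun σ α S)^[n] s ∈ S := by
  induction n with
  | zero => exact hs
  | succ n ih => rw [Function.iterate_succ_apply']; exact phi_mem σ α S hstab ih

/-- motion-iterates realize every φ-iterate. -/
lemma motion_reaches_phi (n : ℕ) {s : H} (hs : s ∈ S) :
    ∃ K : ℕ, (motion σ α S)^[K] s = (phiFun σ α S)^[n] s := by
  induction n with
  | zero => exact ⟨0, rfl⟩
  | succ n ih =>
    obtain ⟨K, hK⟩ := ih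
    obtain ⟨k, _, hkval, _, _⟩ :=
      motion_first_return σ α S hstab (phi_iter_mem σ α S hstab n hs)
    refine ⟨k + K, ?_⟩
    rw [Function.iterate_add_apply, hK, hkval, Function.iterate_succ_apply']

/-- Conversely, a motion-iterate landing in S is a φ-iterate. -/
lemma phi_reaches_motion (K : ℕ) {s : H} (hs : s ∈ S)
    (hKS : (motion σ α S)^[K] s ∈ S) :
    ∃ n : ℕ, (phiFun σ α S)^[n] s = (motion σ α S)^[K] s := by
  induction K using Nat.strong_induction_on generalizing s with
  | _ K ih =>
    rcases Nat.eq_zero_or_pos K with hK0 | hK0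
    · subst hK0; exact ⟨0, rfl⟩
    obtain ⟨k, hk0, hkval, hkS, hkmin⟩ := motion_first_return σ α S hstab hs
    have hkK : k ≤ K := by
      by_contra hlt
      exact hkmin K hK0 (lt_of_not_ge hlt) hKS
    have hsplit : (motion σ α S)^[K] s = (motion σ α S)^[K - k] ((phiFun σ α S) s) := by
      rw [← hkval, ← Function.iterate_add_apply, Nat.sub_add_cancel hkK]
    obtain ⟨n, hn⟩ := ih (K - k) (by omega) hkS (by rw [← hsplit]; exact hKS)
    exact ⟨n + 1, by rw [Function.iterate_succ_apply, hn, ← hsplit]⟩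


lemma phi_iter_foldr (n : ℕ) (x : H) :
    ∃ l : List (H → H),
      (∀ f ∈ l, f = restrictFun (⇑σ) S ∨ f = restrictFun (⇑α) S) ∧
      (l.foldr (fun f g => f ∘ g) id) x = (phiFun σ α S)^[n] x := by
  induction n with
  | zero => exact ⟨[], by simp, rfl⟩
  | succ n ih =>
    obtain ⟨l, hl, hx⟩ := ih
    refine ⟨restrictFun (⇑σ) S :: restrictFun (⇑α) S :: l, ?_, ?_⟩
    · intro f hf
      simp only [List.mem_cons] at hf
      rcases hf with hf | hf | hf
      · exact Or.inl hf
      · exact Or.inr hf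
      · exact hl f hf
    · simp only [List.foldr_cons, Function.comp_apply]
      rw [hx, Function.iterate_succ_apply']
      rfl

lemma motion_bijective (hinv : ∀ h, α (α h) = h) :
    Function.Bijective (motion σ α S) := by
  have hβ : Function.Involutive (fun h : H => if h ∈ S then α h else h) := by
    intro h
    by_cases hh : h ∈ S
    · simp only [if_pos hh, if_pos (hstab h hh), hinv]
    · simp only [if_neg hh]
  have hmot : motion σ α S = ⇑σ ∘ (fun h : H => if h ∈ S then α h else h) := by
    funext h
    by_cases hh : h ∈ S
    · rw [motion_of_mem σ α S hh]; simp [hh]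
    · rw [motion_of_notMem σ α S hh]; simp [hh]
  rw [hmot]
  exact σ.bijective.comp hβ.bijective

end Aux2

/-- the motion function of a spanned map is a cyclic permutation of `H`
if and only if (i) every orbit of `σ` meets `S`, (ii) the restrictions `σ_{|S}` and
`α_{|S}` act transitively on `S`, and (iii) `σ_{|S}∘α_{|S}` is a cyclic permutation
of `S`. -/
theorem motion_cyclic_iff_covered {H : Type*} [Fintype H] [Nonempty H]
    (σ α : Equiv.Perm H) (hmap : IsCombMap σ α)
    (S : Set H) (hstab : ∀ s ∈ S, α s ∈ S) (hne : S.Nonempty) :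
    (Function.Bijective (motion σ α S) ∧
        ∀ x y : H, ∃ k : ℕ, (motion σ α S)^[k] x = y) ↔
      ((∀ x : H, ∃ y ∈ S, σ.SameCycle x y) ∧
       (∀ x ∈ S, ∀ y ∈ S, ∃ l : List (H → H),
          (∀ f ∈ l, f = restrictFun (⇑σ) S ∨ f = restrictFun (⇑α) S) ∧
          (l.foldr (fun f g => f ∘ g) id) x = y) ∧
       (∀ x ∈ S, ∀ y ∈ S, ∃ k : ℕ,
          (fun h => restrictFun (⇑σ) S (restrictFun (⇑α) S h))^[k] x = y)) := by
  classical
  constructor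
  · rintro ⟨-, htrans⟩
    obtain ⟨s₀, hs₀⟩ := hne
    have hiii : ∀ x ∈ S, ∀ y ∈ S, ∃ k : ℕ, (phiFun σ α S)^[k] x = y := by
      intro x hx y hy
      obtain ⟨K, hK⟩ := htrans x y
      obtain ⟨n, hn⟩ := phi_reaches_motion σ α S hstab K hx (by rw [hK]; exact hy)
      exact ⟨n, by rw [hn, hK]⟩
    refine ⟨?_, ?_, hiii⟩
    · intro x
      have hx : ∃ n : ℕ, (⇑σ)^[n] x ∈ S := by
        by_contra hno
        push_neg at hno
        obtain ⟨K, hK⟩ := htrans x s₀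
        rw [motion_iterate_eq_sigma σ α S x K (fun j _ => hno j)] at hK
        exact hno K (by rw [hK]; exact hs₀)
      obtain ⟨n, hn⟩ := hx
      exact ⟨(⇑σ)^[n] x, hn, ⟨(n : ℤ), by rw [zpow_natCast, ← Equiv.Perm.iterate_eq_pow]⟩⟩
    · intro x hx y hy
      obtain ⟨k, hk⟩ := hiii x hx y hy
      obtain ⟨l, hl, hlx⟩ := phi_iter_foldr σ α S hstab k x
      exact ⟨l, hl, by rw [hlx, hk]⟩
  · rintro ⟨hi, -, hiii⟩
    have hbij : Function.Bijective (motion σ α S) :=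
      motion_bijective σ α S hstab hmap.2.1
    refine ⟨hbij, fun x y => ?_⟩
    have hesc : ∀ z : H, ∃ m : ℕ, (motion σ α S)^[m] z ∈ S := by
      intro z
      obtain ⟨w, hwS, hcyc⟩ := hi z
      obtain ⟨i, -, hiw⟩ := hcyc.exists_pow_eq'
      exact motion_escape σ α S z ⟨i, by rw [Equiv.Perm.iterate_eq_pow, hiw]; exact hwS⟩
    obtain ⟨m, hm⟩ := hesc x
    obtain ⟨m', hm'⟩ := hesc y
    obtain ⟨k, hk⟩ := hiii _ hm _ hm'
    obtain ⟨K, hK⟩ := motion_reaches_phi σ α S hstab k hm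
    have hKm : (motion σ α S)^[K + m] x = (motion σ α S)^[m'] y := by
      rw [Function.iterate_add_apply, hK]
      exact hk
    set Θ : Equiv.Perm H := Equiv.ofBijective _ hbij with hΘ
    have hcoe : ⇑Θ = motion σ α S := rfl
    set p := orderOf Θ with hp
    have hppos : 0 < p := orderOf_pos Θ
    have hid : (motion σ α S)^[p] = id := by
      rw [← hcoe, Equiv.Perm.iterate_eq_pow, pow_orderOf_eq_one]
      rfl
    have hmle : m' ≤ p * m' := Nat.le_mul_of_pos_left m' hppos
    refine ⟨(p * m' - m') + (K + m), ?_⟩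
    rw [Function.iterate_add_apply, hKm, ← Function.iterate_add_apply,
      Nat.sub_add_cancel hmle, Function.iterate_mul, hid]
    simp
end

section
/- Let σ and φ be permutations of a finite set X, let S ⊆ X be stable under φ⁻¹∘σ, and let θ be the permutation of X defined by θ(a) = σ(a) if a ∈ S and θ(a) = φ(a) if a ∉ S. Then the first-return restriction of θ to S satisfies θ_{|S}(s) = φ_{|S}((φ⁻¹∘σ)(s)) for every s ∈ S; that is, θ_{|S} = φ_{|S}∘(φ⁻¹σ)_{|S} as permutations of S. -/
/-- The map equal to `σ` on `S` and to `φ` outside `S`. -/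
noncomputable def pieceFun {X : Type*} (σ φ : Equiv.Perm X) (S : Set X) (a : X) : X := by
  classical
  exact if a ∈ S then σ a else φ a

lemma pieceFun_of_mem {X : Type*} (σ φ : Equiv.Perm X) (S : Set X) {a : X} (h : a ∈ S) :
    pieceFun σ φ S a = σ a := by
  classical
  simp [pieceFun, h]

lemma pieceFun_of_not_mem {X : Type*} (σ φ : Equiv.Perm X) (S : Set X) {a : X} (h : a ∉ S) :
    pieceFun σ φ S a = φ a := by
  classical
  simp [pieceFun, h]

/-- if `S` is stable under `φ⁻¹∘σ` and `θ` equals `σ` on `S` and `φ`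
off `S`, then the first-return restriction satisfies
`θ_{|S}(s) = φ_{|S}((φ⁻¹∘σ)(s))` for every `s ∈ S`. -/
theorem restrict_pieceFun_eq {X : Type*} [Fintype X]
    (σ φ : Equiv.Perm X) (S : Set X) (hstab : ∀ s ∈ S, (φ⁻¹ * σ) s ∈ S) :
    ∀ s ∈ S, restrictFun (pieceFun σ φ S) S s = restrictFun (⇑φ) S ((φ⁻¹ * σ) s) := by
  classical
  intro s hs
  set t := (φ⁻¹ * σ) s with htdef
  have ht : t ∈ S := hstab s hs
  have hσs : σ s = φ t := by simp [htdef]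
  -- as long as we haven't returned to S, iterating θ from s matches iterating φ from t
  have key : ∀ k, (∀ j, 0 < j → j ≤ k → φ^[j] t ∉ S) →
      (pieceFun σ φ S)^[k+1] s = φ^[k+1] t := by
    intro k
    induction k with
    | zero =>
      intro _
      simp only [zero_add, Function.iterate_one]
      rw [pieceFun_of_mem σ φ S hs, hσs]
    | succ k ih =>
      intro h
      have h1 := ih (fun j hj hjk => h j hj (hjk.trans (Nat.le_succ _)))
      have h2 : φ^[k+1] t ∉ S := h (k+1) (Nat.succ_pos _) le_rfl
      rw [Function.iterate_succ_apply', h1, pieceFun_of_not_mem σ φ S h2,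
        ← Function.iterate_succ_apply' φ (k+1) t]
  have hexφ : ∃ k : ℕ, 0 < k ∧ φ^[k] t ∈ S := by
    refine ⟨orderOf φ, orderOf_pos φ, ?_⟩
    have : φ^[orderOf φ] t = t := by
      rw [← Equiv.Perm.coe_pow, pow_orderOf_eq_one, Equiv.Perm.coe_one, id]
    rwa [this]
  set n := Nat.find hexφ with hndef
  have hn := Nat.find_spec hexφ
  have hmin : ∀ m, m < n → ¬(0 < m ∧ φ^[m] t ∈ S) := fun m hm => Nat.find_min hexφ hm
  have hminφ : ∀ j, 0 < j → j < n → φ^[j] t ∉ S := fun j hj hjn hjS => hmin j hjn ⟨hj, hjS⟩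
  have hθn : (pieceFun σ φ S)^[n] s = φ^[n] t := by
    have := key (n - 1) (fun j hj hjk => hminφ j hj (by omega))
    rwa [Nat.sub_add_cancel hn.1] at this
  have restrict_eq : ∀ (f : X → X) (x : X), x ∈ S → ∀ k, 0 < k → f^[k] x ∈ S →
      (∀ j, 0 < j → j < k → f^[j] x ∉ S) → restrictFun f S x = f^[k] x := by
    intro f x hx k hk hks hmink
    have hex : x ∈ S ∧ ∃ m : ℕ, 0 < m ∧ f^[m] x ∈ S := ⟨hx, k, hk, hks⟩
    rw [restrictFun, dif_pos hex]
    have : Nat.find hex.2 = k := by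
      rw [Nat.find_eq_iff]
      exact ⟨⟨hk, hks⟩, fun m hm hmp => hmink m hmp.1 hm hmp.2⟩
    rw [this]
  have hL : restrictFun (pieceFun σ φ S) S s = φ^[n] t := by
    rw [restrict_eq (pieceFun σ φ S) s hs n hn.1 (hθn ▸ hn.2) ?_]
    · exact hθn
    · intro j hj hjn
      have hkj := key (j - 1) (fun i hi hik => hminφ i hi (by omega))
      rw [Nat.sub_add_cancel hj] at hkj
      rw [hkj]
      exact hminφ j hj hjn
  have hR : restrictFun (⇑φ) S t = φ^[n] t :=
    restrict_eq (⇑φ) t ht n hn.1 hn.2 hminφ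
  rw [hL, hR]
end

section
/- Let (σ, α) be a combinatorial map on a nonempty finite set H and let S ⊆ H be stable under α with S ≠ ∅ and H∖S ≠ ∅. If ((σ,α),S) is a covered map (i.e. its motion function is a cyclic permutation of H), then the dual spanned map ((σ∘α, α), H∖S) is also a covered map, and moreover the number of orbits of σ on H plus the number of orbits of σ∘α on H equals the number of orbits of σ_{|S} on S plus the number of orbits of (σ∘α)_{|H∖S} on H∖S. (Via the Euler relation, the last identity says that the genus of the map is the sum of the genera of the unicellular submap induced by S and of the dual unicellular submap induced by H∖S.) -/
/-- `f` is a cyclic permutation: it is a bijection with a single (forward) orbit. -/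
def IsCyclicFun {X : Type*} (f : X → X) : Prop :=
  Function.Bijective f ∧ ∀ x y : X, ∃ k : ℕ, f^[k] x = y

/-- The number of orbits of `f` on `S` (forward orbits inside `S`). -/
noncomputable def numOrbitsOn {X : Type*} (f : X → X) (S : Set X) : ℕ :=
  ((fun x => {y | y ∈ S ∧ ∃ k : ℕ, f^[k] x = y}) '' S).ncard

private lemma perm_iter_symm {H : Type*} [Fintype H] (σ : Equiv.Perm H) {x y : H}
    (h : ∃ k, (⇑σ)^[k] x = y) : ∃ m, (⇑σ)^[m] y = x := by
  obtain ⟨k, rfl⟩ := h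
  have ho : 0 < orderOf σ := orderOf_pos σ
  refine ⟨orderOf σ * (k + 1) - k, ?_⟩
  rw [← Function.iterate_add_apply]
  have hk : orderOf σ * (k + 1) - k + k = orderOf σ * (k + 1) := by
    have : k ≤ orderOf σ * (k + 1) := by nlinarith
    omega
  rw [hk, Equiv.Perm.iterate_eq_pow, pow_mul, pow_orderOf_eq_one, one_pow]
  rfl

private lemma orb_eq {H : Type*} [Fintype H] (σ : Equiv.Perm H) {x s : H}
    (hs : ∃ k, (⇑σ)^[k] x = s) :
    {y | ∃ k, (⇑σ)^[k] s = y} = {y | ∃ k, (⇑σ)^[k] x = y} := by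
  obtain ⟨k, hk⟩ := hs
  ext y
  constructor
  · rintro ⟨j, rfl⟩
    exact ⟨j + k, by rw [Function.iterate_add_apply, hk]⟩
  · rintro ⟨j, rfl⟩
    obtain ⟨m, hm⟩ := perm_iter_symm σ ⟨k, hk⟩
    exact ⟨j + m, by rw [Function.iterate_add_apply, hm]⟩

private lemma restrict_step {H : Type*} [Fintype H] (σ : Equiv.Perm H) (S : Set H) {z : H}
    (hz : z ∈ S) :
    ∃ m, 0 < m ∧ (⇑σ)^[m] z ∈ S ∧ restrictFun (⇑σ) S z = (⇑σ)^[m] z ∧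
      ∀ j, 0 < j ∧ (⇑σ)^[j] z ∈ S → m ≤ j := by
  classical
  have hex : ∃ k : ℕ, 0 < k ∧ (⇑σ)^[k] z ∈ S := by
    refine ⟨orderOf σ, orderOf_pos σ, ?_⟩
    have : (⇑σ)^[orderOf σ] z = z := by
      rw [Equiv.Perm.iterate_eq_pow, pow_orderOf_eq_one]; rfl
    rwa [this]
  have hx : z ∈ S ∧ ∃ k : ℕ, 0 < k ∧ (⇑σ)^[k] z ∈ S := ⟨hz, hex⟩
  refine ⟨Nat.find hx.2, (Nat.find_spec hx.2).1, (Nat.find_spec hx.2).2, ?_,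
    fun j hj => Nat.find_min' hx.2 hj⟩
  simp only [restrictFun, dif_pos hx]

private lemma restrict_orbit_eq {H : Type*} [Fintype H] (σ : Equiv.Perm H) (S : Set H) {x : H}
    (hx : x ∈ S) :
    {y | y ∈ S ∧ ∃ k, (restrictFun (⇑σ) S)^[k] x = y} =
      {y | y ∈ S ∧ ∃ k, (⇑σ)^[k] x = y} := by
  set r := restrictFun (⇑σ) S with hr
  have key : ∀ n, r^[n] x ∈ S ∧ ∃ k, (⇑σ)^[k] x = r^[n] x := by
    intro n
    induction n with
    | zero => exact ⟨hx, 0, rfl⟩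
    | succ n ih =>
      obtain ⟨hS, k, hk⟩ := ih
      obtain ⟨m, hm, hmS, heq, -⟩ := restrict_step σ S hS
      rw [Function.iterate_succ_apply',
        show r (r^[n] x) = (⇑σ)^[m] (r^[n] x) from heq]
      exact ⟨hmS, m + k, by rw [Function.iterate_add_apply, hk]⟩
  have key2 : ∀ k, ∀ z ∈ S, (⇑σ)^[k] z ∈ S → ∃ n, r^[n] z = (⇑σ)^[k] z := by
    intro k
    induction k using Nat.strong_induction_on with
    | _ k ih =>
      intro z hz hkS
      rcases Nat.eq_zero_or_pos k with rfl | hk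
      · exact ⟨0, rfl⟩
      · obtain ⟨m, hm, hmS, heq, hmin⟩ := restrict_step σ S hz
        have hmk : m ≤ k := hmin k ⟨hk, hkS⟩
        have hsplit : (⇑σ)^[k] z = (⇑σ)^[k - m] (r z) := by
          rw [hr, heq, ← Function.iterate_add_apply]
          congr 1
          omega
        obtain ⟨n, hn⟩ := ih (k - m) (by omega) (r z) (by rw [hr, heq]; exact hmS)
          (by rw [← hsplit]; exact hkS)
        exact ⟨n + 1, by rw [Function.iterate_succ_apply, hn, hsplit]⟩
  ext y
  simp only [Set.mem_setOf_eq]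
  constructor
  · rintro ⟨hyS, n, rfl⟩
    obtain ⟨-, k, hk⟩ := key n
    exact ⟨hyS, k, hk⟩
  · rintro ⟨hyS, k, rfl⟩
    obtain ⟨n, hn⟩ := key2 k x hx hyS
    exact ⟨hyS, n, hn⟩

private lemma count_eq {H : Type*} [Fintype H] (σ : Equiv.Perm H) (S : Set H)
    (hmeet : ∀ x, ∃ s ∈ S, ∃ k, (⇑σ)^[k] x = s) :
    numOrbitsOn (⇑σ) Set.univ = numOrbitsOn (restrictFun (⇑σ) S) S := by
  classical
  set O : H → Set H := fun x => {y | ∃ k, (⇑σ)^[k] x = y} with hO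
  have h1 : (fun x => {y | y ∈ Set.univ ∧ ∃ k, (⇑σ)^[k] x = y}) = O := by
    funext x; ext y; simp [hO]
  have h2 : ∀ x ∈ S, {y | y ∈ S ∧ ∃ k, (restrictFun (⇑σ) S)^[k] x = y} = O x ∩ S := by
    intro x hx
    rw [restrict_orbit_eq σ S hx]
    ext y
    simp only [Set.mem_setOf_eq, hO, Set.mem_inter_iff]
    tauto
  have himg : (fun x => {y | y ∈ S ∧ ∃ k, (restrictFun (⇑σ) S)^[k] x = y}) '' S
      = (fun t => t ∩ S) '' (O '' Set.univ) := by
    ext T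
    constructor
    · rintro ⟨x, hxS, rfl⟩
      exact ⟨O x, ⟨x, trivial, rfl⟩, (h2 x hxS).symm⟩
    · rintro ⟨t, ⟨x, -, rfl⟩, rfl⟩
      obtain ⟨s, hsS, hs⟩ := hmeet x
      have h3 : O s = O x := orb_eq σ hs
      exact ⟨s, hsS, (h2 s hsS).trans (by rw [h3])⟩
  have hinj : Set.InjOn (fun t => t ∩ S) (O '' Set.univ) := by
    rintro t1 ⟨x, -, rfl⟩ t2 ⟨y, -, rfl⟩ h
    obtain ⟨s, hsS, k, hs⟩ := hmeet x
    have hsx : s ∈ O x ∩ S := ⟨⟨k, hs⟩, hsS⟩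
    have h' : O x ∩ S = O y ∩ S := h
    have hsy : s ∈ O y ∩ S := h' ▸ hsx
    have e1 : O s = O x := orb_eq σ hsx.1
    have e2 : O s = O y := orb_eq σ hsy.1
    rw [← e1, ← e2]
  unfold numOrbitsOn
  rw [h1, himg, Set.ncard_image_of_injOn hinj]

private lemma orbit_meets {H : Type*} (f θ : H → H) (S : Set H)
    (hagree : ∀ z, z ∉ S → θ z = f z)
    (hcyc : ∀ x y : H, ∃ k, θ^[k] x = y) {s0 : H} (hs0 : s0 ∈ S) (x : H) :
    ∃ s ∈ S, ∃ k, f^[k] x = s := by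
  by_contra hc
  push_neg at hc
  have hnot : ∀ k, f^[k] x ∉ S := fun k hk => hc _ hk k rfl
  have heq : ∀ k, θ^[k] x = f^[k] x := by
    intro k
    induction k with
    | zero => rfl
    | succ n ih =>
      rw [Function.iterate_succ_apply', Function.iterate_succ_apply', ih,
        hagree _ (hnot n)]
  obtain ⟨k, hk⟩ := hcyc x s0
  exact hnot k (by rw [← heq k, hk]; exact hs0)

/-- the dual of a covered map is a covered map, and the orbit counts
add up: (number of vertices of `M`) + (number of faces of `M`) =
(number of faces of `M_{|S}`) + (number of faces of `M*_{|H∖S}`), which via Euler's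
relation says that the genus of `M` is the sum of the genera of the two unicellular
submaps. -/
theorem dual_covered_and_genus_additivity {H : Type*} [Fintype H] [Nonempty H]
    (σ α : Equiv.Perm H) (hmap : IsCombMap σ α)
    (S : Set H) (hstab : ∀ s ∈ S, α s ∈ S) (hSne : S.Nonempty) (hScne : Sᶜ.Nonempty)
    (hcov : IsCyclicFun (motion σ α S)) :
    IsCyclicFun (motion (σ * α) α Sᶜ) ∧
    numOrbitsOn (⇑σ) Set.univ + numOrbitsOn (⇑(σ * α)) Set.univ =
      numOrbitsOn (restrictFun (⇑σ) S) S +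
        numOrbitsOn (restrictFun (⇑(σ * α)) Sᶜ) Sᶜ := by
  obtain ⟨-, hinv, -⟩ := hmap
  have hmeq : motion (σ * α) α Sᶜ = motion σ α S := by
    funext h
    by_cases hh : h ∈ S <;>
      simp [motion, hh, Equiv.Perm.mul_apply, hinv]
  have hmeetS : ∀ x, ∃ s ∈ S, ∃ k, (⇑σ)^[k] x = s := by
    obtain ⟨s0, hs0⟩ := hSne
    exact orbit_meets (⇑σ) (motion σ α S) S (fun z hz => by simp [motion, hz]) hcov.2 hs0
  have hmeetSc : ∀ x, ∃ s ∈ Sᶜ, ∃ k, (⇑(σ * α))^[k] x = s := by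
    obtain ⟨t0, ht0⟩ := hScne
    refine orbit_meets (⇑(σ * α)) (motion σ α S) Sᶜ (fun z hz => ?_) hcov.2 ht0
    simp only [Set.mem_compl_iff, not_not] at hz
    simp [motion, hz, Equiv.Perm.mul_apply]
  refine ⟨by rw [hmeq]; exact hcov, ?_⟩
  rw [← count_eq σ S hmeetS, ← count_eq (σ * α) Sᶜ hmeetSc]
end

section
/- For all n ≥ 1 and all v, f ≥ 1, the number of pairs (α, S), where α is a fixed-point-free involution of Fin(2n) and S ⊆ Fin(2n) is an α-stable subset, such that σ_{α,S} has exactly v orbits on Fin(2n) and σ_{α,S}∘α has exactly f orbits on Fin(2n), equals ∑_{m=0}^{n} binom(2n, 2m)·A^v(m)·A^f(n−m). -/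
/-- The vertex-permutation `σ_{α,S}` of the covered map encoded by the pair `(α,S)`:
`σ_{α,S}(h) = γ(α h)` if `h ∈ S` and `σ_{α,S}(h) = γ h` otherwise, where `γ` is the
standard cycle `i ↦ i+1` on `Fin (2n)`. -/
noncomputable def sigmaFun (n : ℕ) (α : Equiv.Perm (Fin (2 * n)))
    (S : Set (Fin (2 * n))) (h : Fin (2 * n)) : Fin (2 * n) := by
  classical
  exact if h ∈ S then finRotate (2 * n) (α h) else finRotate (2 * n) h

/-- `A^v(m)`: the number of rooted unicellular maps with `m` edges and `v` vertices,
i.e. the number of fixed-point-free involutions `β` of `Fin (2m)` such that `γ∘β`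
has exactly `v` orbits; by convention `A^v(0) = 1` iff `v = 1`. -/
noncomputable def A (v m : ℕ) : ℕ :=
  if m = 0 then (if v = 1 then 1 else 0)
  else
    Nat.card {β : Equiv.Perm (Fin (2 * m)) //
      (∀ h, β h ≠ h) ∧ (∀ h, β (β h) = h) ∧
      numOrbitsOn (fun h => finRotate (2 * m) (β h)) Set.univ = v}

/-! For a fixed `α`-stable `S`, the involution `α` splits into fixed-point-free involutions `b` of
`S` and `b'` of `Sᶜ`, and `σ_{α,S} ∘ α = σ_{α,Sᶜ}`. Since `σ_{α,S}` agrees with `γ` off `S`, its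
orbits correspond to those of its first-return map to `S`, which is `γ_S ∘ b` for the cyclic
successor `γ_S` of `S`. Enumerating `S` along the single cycle `γ_S` conjugates `γ_S` to
`γ_{|S|}`, so the admissible `b` are counted by `A^v(|S|/2)`, and the admissible `b'` by
`A^f(n - |S|/2)`. Summing over `S` by cardinality gives the binomial convolution. -/

open Equiv Function Set

variable {X Y : Type*}

def forwardOrbit (f : X → X) (x : X) : Set X := range fun k : ℕ => f^[k] x

section ForwardOrbit

variable {f : X → X} {x y : X}

lemma mem_forwardOrbit_self (f : X → X) (x : X) : x ∈ forwardOrbit f x := ⟨0, rfl⟩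

lemma forwardOrbit_subset_of_mem (h : y ∈ forwardOrbit f x) :
    forwardOrbit f y ⊆ forwardOrbit f x := by
  obtain ⟨k, rfl⟩ := h
  rintro _ ⟨l, rfl⟩
  exact ⟨l + k, iterate_add_apply f l k x⟩

lemma Function.Injective.mem_forwardOrbit_symm [Finite X] (hf : Injective f)
    (h : y ∈ forwardOrbit f x) : x ∈ forwardOrbit f y := by
  obtain ⟨k, rfl⟩ := h
  have hp := minimalPeriod_pos_of_mem_periodicPts (hf.mem_periodicPts x)
  refine ⟨minimalPeriod f x * k - k, ?_⟩
  show f^[_] (f^[k] x) = x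
  rw [← iterate_add_apply, Nat.sub_add_cancel (Nat.le_mul_of_pos_left k hp)]
  exact ((isPeriodicPt_minimalPeriod f x).mul_const k).eq

lemma Function.Injective.forwardOrbit_eq_of_mem [Finite X] (hf : Injective f)
    (h : y ∈ forwardOrbit f x) : forwardOrbit f y = forwardOrbit f x :=
  (forwardOrbit_subset_of_mem h).antisymm
    (forwardOrbit_subset_of_mem (hf.mem_forwardOrbit_symm h))

lemma Function.Semiconj.image_forwardOrbit {g : Y → Y} {e : X → Y} (h : Semiconj e f g)
    (x : X) : e '' forwardOrbit f x = forwardOrbit g (e x) := by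
  simp only [forwardOrbit, ← range_comp]
  exact congrArg range (funext fun k => (h.iterate_right k).eq x)

end ForwardOrbit

section NumOrbits

variable {f : X → X} {g : Y → Y}

lemma numOrbitsOn_eq (f : X → X) (S : Set X) :
    numOrbitsOn f S = ((fun x => S ∩ forwardOrbit f x) '' S).ncard := rfl

lemma numOrbitsOn_range_of_semiconj {e : X → Y} (he : Injective e) (h : Semiconj e f g) :
    numOrbitsOn g (range e) = numOrbitsOn f univ := by
  have hinter : ∀ x, range e ∩ forwardOrbit g (e x) = e '' (univ ∩ forwardOrbit f x) := by
    intro x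
    rw [univ_inter, h.image_forwardOrbit, inter_eq_right, ← h.image_forwardOrbit]
    exact image_subset_range _ _
  have himage : (fun y => range e ∩ forwardOrbit g y) '' range e =
      image e '' ((fun x => univ ∩ forwardOrbit f x) '' univ) := by
    ext O
    simp [hinter]
  rw [numOrbitsOn_eq, numOrbitsOn_eq, himage, ncard_image_of_injective _ (image_injective.2 he)]

lemma numOrbitsOn_univ_eq_of_forall_exists_iterate_mem [Finite X] (hf : Injective f) {S : Set X}
    (hS : ∀ x, ∃ k, f^[k] x ∈ S) : numOrbitsOn f univ = numOrbitsOn f S := by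
  have hrepr : ∀ x, ∃ s ∈ S, forwardOrbit f s = forwardOrbit f x := fun x => by
    obtain ⟨k, hk⟩ := hS x
    exact ⟨_, hk, hf.forwardOrbit_eq_of_mem ⟨k, rfl⟩⟩
  have himage : (fun x => S ∩ forwardOrbit f x) '' S =
      (S ∩ ·) '' ((fun x => univ ∩ forwardOrbit f x) '' univ) := by
    rw [image_image]
    simp only [univ_inter]
    refine (image_mono (subset_univ S)).antisymm ?_
    rintro _ ⟨x, -, rfl⟩
    obtain ⟨s, hs, hsx⟩ := hrepr x
    exact ⟨s, hs, congrArg (S ∩ ·) hsx⟩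
  have hinj : InjOn (S ∩ ·) ((fun x => univ ∩ forwardOrbit f x) '' univ) := by
    rintro _ ⟨x, -, rfl⟩ _ ⟨y, -, rfl⟩ hxy
    simp only [univ_inter] at hxy ⊢
    obtain ⟨s, hs, hsx⟩ := hrepr x
    have hs' : s ∈ S ∩ forwardOrbit f y := hxy ▸ ⟨hs, hsx ▸ mem_forwardOrbit_self f s⟩
    rw [← hsx, hf.forwardOrbit_eq_of_mem hs'.2]
  rw [numOrbitsOn_eq, numOrbitsOn_eq, himage, hinj.ncard_image]

lemma forwardOrbit_eq_univ_iff_numOrbitsOn_eq_one [Nonempty X] :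
    (∀ x, forwardOrbit f x = univ) ↔ numOrbitsOn f univ = 1 := by
  rw [numOrbitsOn_eq, ncard_eq_one]
  constructor
  · intro h
    exact ⟨univ, by simp [h]⟩
  · rintro ⟨O, hO⟩ x
    refine eq_univ_of_forall fun y => ?_
    have hx : univ ∩ forwardOrbit f x = O := hO.subset (mem_image_of_mem _ trivial)
    have hy : univ ∩ forwardOrbit f y = O := hO.subset (mem_image_of_mem _ trivial)
    have hyy : y ∈ univ ∩ forwardOrbit f y := ⟨trivial, mem_forwardOrbit_self f y⟩
    rw [hy, ← hx] at hyy
    exact hyy.2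

end NumOrbits

section FirstReturn

open Classical in
noncomputable def firstReturn (f : X → X) (S : Set X) (x : X) : X :=
  if h : ∃ k, 0 < k ∧ f^[k] x ∈ S then f^[Nat.find h] x else x

variable {f : X → X} {S : Set X} {x : X}

lemma exists_firstReturn_eq_iterate (h : ∃ k, 0 < k ∧ f^[k] x ∈ S) :
    ∃ k, 0 < k ∧ f^[k] x ∈ S ∧ (∀ i, 0 < i → i < k → f^[i] x ∉ S) ∧
      firstReturn f S x = f^[k] x := by
  classical
  refine ⟨Nat.find h, (Nat.find_spec h).1, (Nat.find_spec h).2,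
    fun i hi hik hiS => Nat.find_min h hik ⟨hi, hiS⟩, ?_⟩
  rw [firstReturn, dif_pos h]

lemma firstReturn_eq_iterate {k : ℕ} (hk : 0 < k) (hkS : f^[k] x ∈ S)
    (hmin : ∀ i, 0 < i → i < k → f^[i] x ∉ S) : firstReturn f S x = f^[k] x := by
  obtain ⟨l, hl, hlS, hlmin, hret⟩ := exists_firstReturn_eq_iterate ⟨k, hk, hkS⟩
  obtain rfl : l = k := by
    by_contra hne
    rcases Nat.lt_or_gt_of_ne hne with hlt | hlt
    exacts [hmin l hl hlt hlS, hlmin k hk hlt hkS]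
  exact hret

lemma firstReturn_mem (hx : x ∈ S) : firstReturn f S x ∈ S := by
  classical
  rw [firstReturn]
  split_ifs with h
  exacts [(Nat.find_spec h).2, hx]

lemma Function.Injective.exists_pos_iterate_mem [Finite X] (hf : Injective f) (hx : x ∈ S) :
    ∃ k, 0 < k ∧ f^[k] x ∈ S :=
  ⟨minimalPeriod f x, minimalPeriod_pos_of_mem_periodicPts (hf.mem_periodicPts x),
    (iterate_minimalPeriod (f := f)).symm ▸ hx⟩

lemma inter_forwardOrbit_firstReturn [Finite X] (hf : Injective f) (hx : x ∈ S) :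
    S ∩ forwardOrbit (firstReturn f S) x = S ∩ forwardOrbit f x := by
  have hstep : ∀ y ∈ S, ∃ k, 0 < k ∧ f^[k] y ∈ S ∧ (∀ i, 0 < i → i < k → f^[i] y ∉ S) ∧
      firstReturn f S y = f^[k] y := fun y hy =>
    exists_firstReturn_eq_iterate (hf.exists_pos_iterate_mem hy)
  have hreturns : ∀ j, (firstReturn f S)^[j] x ∈ S ∩ forwardOrbit f x := by
    intro j
    induction j with
    | zero => exact ⟨hx, mem_forwardOrbit_self f x⟩
    | succ j ih =>
      obtain ⟨k, -, hkS, -, hk⟩ := hstep _ ih.1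
      rw [iterate_succ_apply', hk]
      exact ⟨hkS, forwardOrbit_subset_of_mem ih.2 ⟨k, rfl⟩⟩
  have hvisits : ∀ k, ∀ y ∈ S, f^[k] y ∈ S → f^[k] y ∈ forwardOrbit (firstReturn f S) y := by
    intro k
    induction k using Nat.strong_induction_on with
    | _ k ih =>
      intro y hy hkS
      rcases Nat.eq_zero_or_pos k with rfl | hk
      · exact mem_forwardOrbit_self _ y
      obtain ⟨r, hr, -, hrmin, hret⟩ := hstep y hy
      have hrk : r ≤ k := not_lt.1 fun hkr => hrmin k hk hkr hkS
      have hsplit : f^[k] y = f^[k - r] (firstReturn f S y) := by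
        rw [hret, ← iterate_add_apply, Nat.sub_add_cancel hrk]
      rw [hsplit] at hkS ⊢
      exact forwardOrbit_subset_of_mem ⟨1, rfl⟩ (ih (k - r) (by omega) _ (firstReturn_mem hy) hkS)
  ext y
  constructor
  · rintro ⟨-, j, rfl⟩
    exact hreturns j
  · rintro ⟨hyS, k, rfl⟩
    exact ⟨hyS, hvisits k x hx hyS⟩

lemma numOrbitsOn_firstReturn [Finite X] (hf : Injective f) :
    numOrbitsOn (firstReturn f S) S = numOrbitsOn f S := by
  rw [numOrbitsOn_eq, numOrbitsOn_eq]
  exact congrArg ncard (image_congr fun x hx => inter_forwardOrbit_firstReturn hf hx)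

lemma iterate_eq_of_forall_iterate_notMem {σ γ : X → X} (hout : ∀ y ∉ S, σ y = γ y) {j : ℕ}
    (h : ∀ i < j, γ^[i] x ∉ S) : σ^[j] x = γ^[j] x := by
  induction j with
  | zero => rfl
  | succ j ih =>
    rw [iterate_succ_apply', iterate_succ_apply', ih fun i hi => h i (by omega),
      hout _ (h j (by omega))]

lemma firstReturn_eq_of_eqOn_compl {σ γ : X → X} (hout : ∀ y ∉ S, σ y = γ y) {z : X}
    (hxz : σ x = γ z) (hz : ∃ k, 0 < k ∧ γ^[k] z ∈ S) :
    firstReturn σ S x = firstReturn γ S z := by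
  obtain ⟨k, hk, hkS, hmin, hret⟩ := exists_firstReturn_eq_iterate hz
  have hagree : ∀ j, 0 < j → j ≤ k → σ^[j] x = γ^[j] z := by
    intro j hj hjk
    obtain ⟨j, rfl⟩ := Nat.exists_eq_add_of_lt hj
    rw [zero_add, iterate_succ_apply, iterate_succ_apply, hxz]
    refine iterate_eq_of_forall_iterate_notMem hout fun i hi => ?_
    rw [← iterate_succ_apply]
    exact hmin (i + 1) (by omega) (by omega)
  rw [hret, ← hagree k hk le_rfl]
  refine firstReturn_eq_iterate hk (hagree k hk le_rfl ▸ hkS) fun i hi hik => ?_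
  rw [hagree i hi hik.le]
  exact hmin i hi hik

noncomputable def firstReturnMap (f : X → X) (S : Set X) (y : S) : S :=
  ⟨firstReturn f S y, firstReturn_mem y.2⟩

end FirstReturn

theorem numOrbitsOn_comp_ofSubtype [Finite X] {γ : X → X} (hγ : Injective γ) {S : Set X}
    [DecidablePred (· ∈ S)] (hS : ∀ x, ∃ k, γ^[k] x ∈ S) (b : Perm S) :
    numOrbitsOn (γ ∘ Perm.ofSubtype b) univ = numOrbitsOn (firstReturnMap γ S ∘ b) univ := by
  set σ := γ ∘ Perm.ofSubtype b
  have hout : ∀ y ∉ S, σ y = γ y := fun y hy => by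
    simp [σ, Perm.ofSubtype_apply_of_not_mem b hy]
  have hmeet : ∀ x, ∃ k, σ^[k] x ∈ S := by
    classical
    intro x
    refine ⟨Nat.find (hS x), ?_⟩
    rw [iterate_eq_of_forall_iterate_notMem hout fun i hi => Nat.find_min (hS x) hi]
    exact Nat.find_spec (hS x)
  have hsemiconj : Semiconj Subtype.val (firstReturnMap γ S ∘ b) (firstReturn σ S) := fun y =>
    (firstReturn_eq_of_eqOn_compl hout (by simp [σ]) (hγ.exists_pos_iterate_mem (b y).2)).symm
  have hσ : Injective σ := hγ.comp (Perm.ofSubtype b).injective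
  rw [numOrbitsOn_univ_eq_of_forall_exists_iterate_mem hσ hmeet, ← numOrbitsOn_firstReturn hσ,
    ← numOrbitsOn_range_of_semiconj Subtype.val_injective hsemiconj, Subtype.range_coe]

theorem exists_equiv_semiconj_finRotate [Finite Y] {g : Y → Y} (hg : numOrbitsOn g univ = 1)
    {M : ℕ} (hM : Nat.card Y = M) : ∃ e : Fin M ≃ Y, Semiconj e (finRotate M) g := by
  rcases isEmpty_or_nonempty Y with hY | hY
  · rw [numOrbitsOn_eq, univ_eq_empty_iff.2 hY, image_empty, ncard_empty] at hg
    exact absurd hg zero_ne_one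
  obtain ⟨y₀⟩ := id hY
  have hall : ∀ x y, y ∈ forwardOrbit g x := fun x y =>
    (forwardOrbit_eq_univ_iff_numOrbitsOn_eq_one.2 hg x).symm ▸ mem_univ y
  have hper : y₀ ∈ periodicPts g := by
    obtain ⟨k, hk⟩ := hall (g y₀) y₀
    exact mk_mem_periodicPts k.succ_pos (by rwa [IsPeriodicPt, IsFixedPt, iterate_succ_apply])
  set p := minimalPeriod g y₀
  have hp : 0 < p := minimalPeriod_pos_of_mem_periodicPts hper
  have hbij : Bijective fun i : Fin p => g^[i] y₀ := by
    refine ⟨fun i j hij => Fin.ext (iterate_injOn_Iio_minimalPeriod i.2 j.2 hij), fun y => ?_⟩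
    obtain ⟨k, rfl⟩ := hall y₀ y
    exact ⟨⟨k % p, Nat.mod_lt k hp⟩, iterate_mod_minimalPeriod_eq⟩
  obtain rfl : p = M := by
    rw [← hM, ← Nat.card_eq_of_bijective _ hbij, Nat.card_eq_fintype_card, Fintype.card_fin]
  refine ⟨Equiv.ofBijective _ hbij, fun i => ?_⟩
  simp only [Equiv.ofBijective_apply]
  rw [← iterate_succ_apply' g, ← iterate_mod_minimalPeriod_eq (n := i + 1), finRotate_apply, Fin.val_add, Fin.val_one', Nat.add_mod_mod]

section FinRotate

variable {N : ℕ} [NeZero N]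

open Fin.NatCast in
lemma iterate_finRotate (x : Fin N) (k : ℕ) : (finRotate N)^[k] x = x + (k : Fin N) := by
  induction k with
  | zero => simp
  | succ k ih => rw [iterate_succ_apply', ih, finRotate_apply, Nat.cast_succ, add_assoc]

lemma forwardOrbit_finRotate (x : Fin N) : forwardOrbit (finRotate N) x = univ :=
  eq_univ_of_forall fun y => ⟨(y - x).val, by
    dsimp only
    rw [iterate_finRotate, Fin.cast_val_eq_self, add_sub_cancel]⟩

lemma numOrbitsOn_finRotate : numOrbitsOn (finRotate N) univ = 1 :=
  forwardOrbit_eq_univ_iff_numOrbitsOn_eq_one.1 forwardOrbit_finRotate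

lemma exists_iterate_finRotate_mem {S : Set (Fin N)} (hS : S.Nonempty) (x : Fin N) :
    ∃ k, (finRotate N)^[k] x ∈ S := by
  obtain ⟨s, hs⟩ := hS
  obtain ⟨k, rfl⟩ : s ∈ forwardOrbit (finRotate N) x := forwardOrbit_finRotate x ▸ mem_univ s
  exact ⟨k, hs⟩

lemma numOrbitsOn_firstReturnMap_finRotate {S : Set (Fin N)} (hS : S.Nonempty) :
    numOrbitsOn (firstReturnMap (finRotate N) S) univ = 1 := by
  classical
  simpa [numOrbitsOn_finRotate] using (numOrbitsOn_comp_ofSubtype (finRotate N).injective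
    (exists_iterate_finRotate_mem hS) 1).symm

end FinRotate

def IsFixedPointFreeInvolution (β : Perm X) : Prop := (∀ x, β x ≠ x) ∧ Involutive β

section FixedPointFreeInvolution

variable {β : Perm X}

lemma isFixedPointFreeInvolution_permCongr_iff (e : X ≃ Y) :
    IsFixedPointFreeInvolution (e.permCongr β) ↔ IsFixedPointFreeInvolution β := by
  unfold IsFixedPointFreeInvolution Involutive
  refine and_congr ?_ ?_ <;> refine e.forall_congr_right.symm.trans (forall_congr' fun x => ?_) <;>
    simp

lemma IsFixedPointFreeInvolution.even_card [Fintype X] (hβ : IsFixedPointFreeInvolution β) :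
    Even (Fintype.card X) := by
  classical
  rw [even_iff_two_dvd]
  by_contra h
  obtain ⟨x, hx⟩ := Perm.exists_fixed_point_of_prime (p := 2) (n := 1) (σ := β) h
    (by ext x; simp [sq, hβ.2 x])
  exact hβ.1 x hx

lemma isFixedPointFreeInvolution_iff_subtypePerm {S : Set X} (hS : ∀ x, β x ∈ S ↔ x ∈ S) :
    IsFixedPointFreeInvolution β ↔ IsFixedPointFreeInvolution (β.subtypePerm hS) ∧
      IsFixedPointFreeInvolution (β.subtypePerm (p := (· ∈ Sᶜ)) fun x => not_congr (hS x)) := by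
  have hsplit (P : X → Prop) : (∀ x, P x) ↔ (∀ x ∈ S, P x) ∧ ∀ x ∈ Sᶜ, P x :=
    ⟨fun h => ⟨fun x _ => h x, fun x _ => h x⟩, fun h x => by
      by_cases hx : x ∈ S
      exacts [h.1 x hx, h.2 x hx]⟩
  simp only [IsFixedPointFreeInvolution, Involutive, Subtype.forall, ne_eq, Subtype.ext_iff,
    Perm.subtypePerm_apply]
  rw [hsplit, hsplit (fun x => β (β x) = x)]
  tauto

end FixedPointFreeInvolution

-- For any `α` restricting to `b` on `T`, `finRotate N ∘ Perm.ofSubtype b` is `σ_{α,T}`.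
noncomputable def matchingCount {N : ℕ} (T : Set (Fin N)) [DecidablePred (· ∈ T)] (w : ℕ) : ℕ :=
  Nat.card {b : Perm T // IsFixedPointFreeInvolution b ∧
    numOrbitsOn (finRotate N ∘ Perm.ofSubtype b) univ = w}

section MatchingCount

variable {N : ℕ} [NeZero N] (w : ℕ)

lemma matchingCount_empty [DecidablePred (· ∈ (∅ : Set (Fin N)))] :
    matchingCount (∅ : Set (Fin N)) w = A w 0 := by
  have hb (b : Perm (∅ : Set (Fin N))) : finRotate N ∘ Perm.ofSubtype b = finRotate N := by
    rw [Subsingleton.elim b 1, map_one, Perm.coe_one, comp_id]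
  have hfree (b : Perm (∅ : Set (Fin N))) : IsFixedPointFreeInvolution b :=
    ⟨fun x => x.2.elim, fun x => x.2.elim⟩
  simp only [matchingCount, A, if_pos, hb, hfree, numOrbitsOn_finRotate, true_and]
  split_ifs with hw <;> simp [hw, eq_comm (a := 1)]

lemma matchingCount_of_nonempty (T : Set (Fin N)) [DecidablePred (· ∈ T)] (hT : T.Nonempty)
    {m : ℕ} (hm : T.ncard = 2 * m) : matchingCount T w = A w m := by
  obtain ⟨e, he⟩ := exists_equiv_semiconj_finRotate (numOrbitsOn_firstReturnMap_finRotate hT)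
    (by rw [Nat.card_coe_set_eq, hm])
  have hm0 : m ≠ 0 := by
    rintro rfl
    exact hT.ne_empty ((ncard_eq_zero T.toFinite).1 hm)
  rw [matchingCount, A, if_neg hm0]
  refine Nat.card_congr (e.permCongr.subtypeEquiv fun β => ?_).symm
  have hsemiconj : Semiconj e (fun i => finRotate (2 * m) (β i))
      (firstReturnMap (finRotate N) T ∘ e.permCongr β) := fun i => by
    simp only [comp_apply, permCongr_apply, symm_apply_apply]
    exact he (β i)
  rw [← and_assoc, numOrbitsOn_comp_ofSubtype (finRotate N).injective
    (exists_iterate_finRotate_mem hT), ← e.range_eq_univ,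
    numOrbitsOn_range_of_semiconj e.injective hsemiconj]
  exact and_congr_left' (isFixedPointFreeInvolution_permCongr_iff e).symm

lemma matchingCount_eq (T : Set (Fin N)) [DecidablePred (· ∈ T)] :
    matchingCount T w = if Even T.ncard then A w (T.ncard / 2) else 0 := by
  split_ifs with hT
  · obtain ⟨m, hm⟩ := hT
    rw [hm, show (m + m) / 2 = m by omega]
    rcases T.eq_empty_or_nonempty with rfl | hT
    · rw [ncard_empty] at hm
      rw [show m = 0 by omega, matchingCount_empty]
    · exact matchingCount_of_nonempty w T hT (by omega)
  · rw [matchingCount, Nat.card_eq_zero]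
    left
    refine ⟨fun ⟨b, hb, _⟩ => hT ?_⟩
    rw [← Nat.card_coe_set_eq, Nat.card_eq_fintype_card]
    exact hb.even_card

end MatchingCount

def stablePermEquivProd (S : Set X) [DecidablePred (· ∈ S)] :
    {α : Perm X // ∀ x, α x ∈ S ↔ x ∈ S} ≃ Perm S × Perm ↥Sᶜ where
  toFun α := (α.1.subtypePerm α.2, α.1.subtypePerm fun x => not_congr (α.2 x))
  invFun b := ⟨b.1.subtypeCongr b.2, fun x => by
    by_cases hx : x ∈ S
    · rw [Perm.subtypeCongr.left_apply _ _ hx]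
      exact iff_of_true (b.1 _).2 hx
    · rw [Perm.subtypeCongr.right_apply _ _ hx]
      exact iff_of_false (b.2 _).2 hx⟩
  left_inv α := by
    ext x
    by_cases hx : x ∈ S
    · simp [Perm.subtypeCongr.left_apply _ _ hx]
    · simp [Perm.subtypeCongr.right_apply _ _ hx]
  right_inv b := by
    ext x
    · simp [Perm.subtypeCongr.left_apply _ _ x.2]
    · simp [Perm.subtypeCongr.right_apply _ _ x.2]

section Shuffle

variable {n : ℕ} {α : Perm (Fin (2 * n))} {S : Set (Fin (2 * n))} [DecidablePred (· ∈ S)]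

lemma sigmaFun_eq (hS : ∀ x, α x ∈ S ↔ x ∈ S) :
    sigmaFun n α S = finRotate (2 * n) ∘ Perm.ofSubtype (α.subtypePerm hS) := by
  ext x
  by_cases hx : x ∈ S
  · simp [sigmaFun, hx, Perm.ofSubtype_apply_of_mem]
  · simp [sigmaFun, hx, Perm.ofSubtype_apply_of_not_mem]

lemma sigmaFun_comp_eq (hS : ∀ x, α x ∈ S ↔ x ∈ S) (hα : Involutive α) :
    (fun h => sigmaFun n α S (α h)) = finRotate (2 * n) ∘
      Perm.ofSubtype (α.subtypePerm (p := (· ∈ Sᶜ)) fun x => not_congr (hS x)) := by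
  ext x
  by_cases hx : x ∈ S
  · simp [sigmaFun, hx, hS, hα x, Perm.ofSubtype_apply_of_not_mem]
  · simp [sigmaFun, hx, hS, Perm.ofSubtype_apply_of_mem]

end Shuffle

theorem card_coveredMaps_fiber (n v f : ℕ) (S : Set (Fin (2 * n))) [DecidablePred (· ∈ S)] :
    Nat.card {α : Perm (Fin (2 * n)) // (∀ h, α h ≠ h) ∧ (∀ h, α (α h) = h) ∧
      (∀ s ∈ S, α s ∈ S) ∧ numOrbitsOn (sigmaFun n α S) univ = v ∧
      numOrbitsOn (fun h => sigmaFun n α S (α h)) univ = f} =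
    matchingCount S v * matchingCount Sᶜ f := by
  rw [matchingCount, matchingCount, ← Nat.card_prod]
  refine Nat.card_congr (((subtypeSubtypeEquivSubtype fun ⟨_, hα, hS, _⟩ x =>
    ⟨fun hx => hα x ▸ hS _ hx, hS x⟩).symm.trans
      ((stablePermEquivProd S).subtypeEquiv fun ⟨α, hS⟩ => ?_)).trans subtypeProdEquivProd)
  simp only [stablePermEquivProd, coe_fn_mk]
  constructor
  · rintro ⟨hfix, hinv, -, hv, hf⟩
    obtain ⟨h1, h2⟩ := (isFixedPointFreeInvolution_iff_subtypePerm hS).1 ⟨hfix, hinv⟩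
    rw [sigmaFun_eq hS] at hv
    rw [sigmaFun_comp_eq hS hinv] at hf
    exact ⟨⟨h1, hv⟩, h2, hf⟩
  · rintro ⟨⟨h1, hv⟩, h2, hf⟩
    obtain ⟨hfix, hinv⟩ := (isFixedPointFreeInvolution_iff_subtypePerm hS).2 ⟨h1, h2⟩
    exact ⟨hfix, hinv, fun s => (hS s).2, by rwa [sigmaFun_eq hS],
      by rwa [sigmaFun_comp_eq hS hinv]⟩

theorem card_subtype_prod_eq_sum {α β : Type*} [Finite α] [Fintype β] (p : α × β → Prop) :
    Nat.card {x // p x} = ∑ b, Nat.card {a // p (a, b)} := by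
  rw [← Nat.card_sigma]
  exact Nat.card_congr ((subtypeEquiv (prodComm α β) fun _ => Iff.rfl).trans
    (subtypeProdEquivSigmaSubtype fun b a => p (a, b)))

theorem sum_set_apply_ncard {α M : Type*} [Fintype α] [DecidableEq α] [AddCommMonoid M]
    (g : ℕ → M) :
    ∑ S : Set α, g S.ncard =
      ∑ k ∈ Finset.range (Fintype.card α + 1), (Fintype.card α).choose k • g k := by
  rw [← Finset.card_univ, ← Finset.sum_powerset_apply_card, Finset.powerset_univ]
  exact (Fintype.sum_equiv Fintype.finsetEquivSet _ _ fun s => by simp).symm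

theorem sum_range_ite_even {M : Type*} [AddCommMonoid M] (g : ℕ → M) (n : ℕ) :
    ∑ k ∈ Finset.range (2 * n + 1), (if Even k then g (k / 2) else 0) =
      ∑ m ∈ Finset.range (n + 1), g m := by
  induction n with
  | zero => simp
  | succ n ih =>
    rw [show 2 * (n + 1) + 1 = 2 * n + 1 + 1 + 1 by ring, Finset.sum_range_succ,
      Finset.sum_range_succ, ih, Finset.sum_range_succ (n := n + 1)]
    simp [parity_simps, show (2 * n + 1 + 1) / 2 = n + 1 by omega]

theorem sum_range_choose_smul_ite_even_mul (n : ℕ) (a b : ℕ → ℕ) :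
    ∑ k ∈ Finset.range (2 * n + 1), (2 * n).choose k •
      ((if Even k then a (k / 2) else 0) * if Even (2 * n - k) then b ((2 * n - k) / 2) else 0) =
    ∑ m ∈ Finset.range (n + 1), (2 * n).choose (2 * m) * a m * b (n - m) := by
  rw [← sum_range_ite_even fun m => (2 * n).choose (2 * m) * a m * b (n - m)]
  refine Finset.sum_congr rfl fun k hk => ?_
  rw [Finset.mem_range] at hk
  by_cases hk2 : Even k
  · obtain ⟨m, rfl⟩ := id hk2
    have hcompl_even : Even (2 * n - (m + m)) := ⟨n - m, by omega⟩
    simp only [hk2, hcompl_even, if_true, smul_eq_mul, show (m + m) / 2 = m by omega,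
      show (2 * n - (m + m)) / 2 = n - m by omega, show 2 * m = m + m by ring, mul_assoc]
  · simp [hk2]

theorem covered_maps_shuffle_count_general (n v f : ℕ) (hn : 1 ≤ n) :
    Nat.card {p : Equiv.Perm (Fin (2 * n)) × Set (Fin (2 * n)) //
      (∀ h, p.1 h ≠ h) ∧ (∀ h, p.1 (p.1 h) = h) ∧ (∀ s ∈ p.2, p.1 s ∈ p.2) ∧
      numOrbitsOn (sigmaFun n p.1 p.2) Set.univ = v ∧
      numOrbitsOn (fun h => sigmaFun n p.1 p.2 (p.1 h)) Set.univ = f} =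
    ∑ m ∈ Finset.range (n + 1),
      Nat.choose (2 * n) (2 * m) * A v m * A f (n - m) := by
  classical
  have : NeZero (2 * n) := ⟨by omega⟩
  rw [card_subtype_prod_eq_sum]
  simp only [card_coveredMaps_fiber]
  have hcompl (S : Set (Fin (2 * n))) : Sᶜ.ncard = 2 * n - S.ncard := by
    rw [ncard_compl, Nat.card_eq_fintype_card, Fintype.card_fin]
  simp only [matchingCount_eq, hcompl]
  rw [sum_set_apply_ncard fun k => (if Even k then A v (k / 2) else 0) *
      if Even (2 * n - k) then A f ((2 * n - k) / 2) else 0,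
    Fintype.card_fin, sum_range_choose_smul_ite_even_mul]

/-- the number of covered maps with `n` edges, `v` vertices and `f`
faces (encoded as pairs `(α,S)`) equals `∑_{m=0}^{n} C(2n,2m)·A^v(m)·A^f(n−m)`. -/
theorem covered_maps_shuffle_count (n v f : ℕ) (hn : 1 ≤ n) (hv : 1 ≤ v) (hf : 1 ≤ f) :
    Nat.card {p : Equiv.Perm (Fin (2 * n)) × Set (Fin (2 * n)) //
      (∀ h, p.1 h ≠ h) ∧ (∀ h, p.1 (p.1 h) = h) ∧ (∀ s ∈ p.2, p.1 s ∈ p.2) ∧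
      numOrbitsOn (sigmaFun n p.1 p.2) Set.univ = v ∧
      numOrbitsOn (fun h => sigmaFun n p.1 p.2 (p.1 h)) Set.univ = f} =
    ∑ m ∈ Finset.range (n + 1),
      Nat.choose (2 * n) (2 * m) * A v m * A f (n - m) :=
  covered_maps_shuffle_count_general n v f hn
end

section
/- Let (σ, α) be a combinatorial map on a nonempty finite set H rooted at r ∈ H, with an orientation (I, O) and backward function β. Then every element of I is the extremity of some left-path if and only if for every h ∈ H there exists an integer q > 0 with β^q(h) = r. -/
/-- The backward function of an orientation with ingoing set `I`:
`β(h) = σ(α h)` if `h ∈ I` and `β(h) = σ h` otherwise. -/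
noncomputable def backward {X : Type*} (σ α : Equiv.Perm X) (I : Set X) (h : X) : X := by
  classical
  exact if h ∈ I then σ (α h) else σ h

/-- `h 1, …, h k` (with `h 0 = r`) is a left-path: a sequence of pairwise distinct
ingoing half-edges such that each `h (i-1)` is reached from `α (h i)` by iterating `σ`
while only meeting outgoing half-edges strictly before arrival. -/
def IsLeftPath {X : Type*} (σ α : Equiv.Perm X) (r : X) (I O : Set X)
    (k : ℕ) (h : ℕ → X) : Prop :=
  1 ≤ k ∧ h 0 = r ∧ (∀ i, 1 ≤ i → i ≤ k → h i ∈ I) ∧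
    (∀ i j, 1 ≤ i → i < j → j ≤ k → h i ≠ h j) ∧
    ∀ i, 1 ≤ i → i ≤ k →
      ∃ q : ℕ, 0 < q ∧ h (i - 1) = (⇑σ)^[q] (α (h i)) ∧
        ∀ p, p < q → (⇑σ)^[p] (α (h i)) ∈ O

/-!
On outgoing half-edges `β` is `σ`, and `β (α h) = β h` for every `h`. Hence a left step from
`z ∈ I` to `y` is the same thing as a stretch of the `β`-orbit of `z` that runs from `z` to `y`
through outgoing half-edges only. Following the steps of a left-path backwards, its extremity
reaches `r` under `β`, and so does the opposite of any outgoing half-edge. Conversely, the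
`β`-orbit of `x ∈ I` up to its first visit to `r`, cut at its ingoing half-edges, is a left-path:
the cut points are distinct because before its first hitting time of `r` the orbit cannot come
back to `x`.
-/

open Function Set

section Iterate

variable {X : Type*}

theorem Set.EqOn.iterate_apply_eq {f g : X → X} {s : Set X} (hfg : EqOn f g s) {x : X} {n : ℕ}
    (hx : ∀ p < n, f^[p] x ∈ s) : f^[n] x = g^[n] x := by
  induction n with
  | zero => rfl
  | succ n ih =>
    rw [iterate_succ_apply', iterate_succ_apply', ← ih fun p hp => hx p (by omega),
      hfg (hx n n.lt_succ_self)]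

def hittingTimes (f : X → X) (r x : X) : Set ℕ := {n | 0 < n ∧ f^[n] x = r}

variable {f : X → X} {r x : X} {q : ℕ}

theorem iterate_ne_self_of_isLeast_hittingTimes (hq : IsLeast (hittingTimes f r x) q) {s : ℕ}
    (hs : 0 < s) (hsq : s < q) : f^[s] x ≠ x := by
  intro hfix
  have : q ≤ q - s := hq.2 ⟨by omega, by
    rw [← hfix, ← iterate_add_apply, Nat.sub_add_cancel hsq.le, hq.1.2]⟩
  omega

theorem isLeast_hittingTimes_iterate (hq : IsLeast (hittingTimes f r x) q) {m : ℕ}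
    (hm : m < q) : IsLeast (hittingTimes f r (f^[m] x)) (q - m) := by
  refine ⟨⟨by omega, by rw [← iterate_add_apply, Nat.sub_add_cancel hm.le, hq.1.2]⟩,
    fun n ⟨hn, hnr⟩ => ?_⟩
  have : q ≤ n + m := hq.2 ⟨by omega, by rwa [iterate_add_apply]⟩
  omega

end Iterate

section LeftPath

variable {X : Type*} {σ α : Equiv.Perm X} {r x : X} {I O : Set X} {k : ℕ} {h : ℕ → X}

def IsLeftStep (σ α : Equiv.Perm X) (O : Set X) (y z : X) : Prop :=
  ∃ q : ℕ, 0 < q ∧ y = (⇑σ)^[q] (α z) ∧ ∀ p, p < q → (⇑σ)^[p] (α z) ∈ O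

theorem IsLeftPath.isLeftStep (hp : IsLeftPath σ α r I O k h) {i : ℕ} (hi : 1 ≤ i)
    (hik : i ≤ k) : IsLeftStep σ α O (h (i - 1)) (h i) :=
  hp.2.2.2.2 i hi hik

theorem isLeftPath_one (hx : x ∈ I) (hstep : IsLeftStep σ α O r x) :
    IsLeftPath σ α r I O 1 (fun i => if i = 0 then r else x) := by
  refine ⟨le_rfl, rfl, fun i hi _ => ?_, fun i j hi hij hj => by omega, fun i hi hik => ?_⟩
  · simpa [show i ≠ 0 by omega] using hx
  · obtain rfl : i = 1 := by omega
    simpa [IsLeftStep] using hstep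

theorem IsLeftPath.snoc (hp : IsLeftPath σ α r I O k h) (hx : x ∈ I)
    (hne : ∀ i, 1 ≤ i → i ≤ k → h i ≠ x) (hstep : IsLeftStep σ α O (h k) x) :
    IsLeftPath σ α r I O (k + 1) (fun i => if i ≤ k then h i else x) := by
  obtain ⟨hk, h0, hI, hinj, hsteps⟩ := hp
  refine ⟨by omega, by simp [h0], fun i hi hik => ?_, fun i j hi hij hjk => ?_,
    fun i hi hik => ?_⟩
  · dsimp only
    split_ifs
    exacts [hI i hi ‹_›, hx]
  · rcases hjk.lt_or_eq with hjk | rfl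
    · simp [show i ≤ k by omega, show j ≤ k by omega, hinj i j hi hij (by omega)]
    · simp [show i ≤ k by omega, hne i hi (by omega)]
  · rcases hik.lt_or_eq with hik | rfl
    · simpa [show i ≤ k by omega, show i - 1 ≤ k by omega] using hsteps i hi (by omega)
    · simpa [IsLeftStep] using hstep

end LeftPath

section Backward

variable {X : Type*} {σ α : Equiv.Perm X} {I : Set X} {r x y z : X}

theorem backward_of_mem (hx : x ∈ I) : backward σ α I x = σ (α x) := by
  simp [backward, hx]

theorem backward_of_notMem (hx : x ∉ I) : backward σ α I x = σ x := by
  simp [backward, hx]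

theorem backward_eqOn_compl : EqOn (backward σ α I) σ Iᶜ := fun _ => backward_of_notMem

theorem backward_apply_alpha (hα : Involutive α) (hIα : ∀ x, α x ∈ I ↔ x ∉ I) (x : X) :
    backward σ α I (α x) = backward σ α I x := by
  by_cases hx : x ∈ I
  · rw [backward_of_notMem fun h => (hIα x).mp h hx, backward_of_mem hx]
  · rw [backward_of_mem ((hIα x).mpr hx), hα x, backward_of_notMem hx]

theorem iterate_backward_apply_alpha (hα : Involutive α) (hIα : ∀ x, α x ∈ I ↔ x ∉ I)
    {n : ℕ} (hn : 0 < n) : (backward σ α I)^[n] (α x) = (backward σ α I)^[n] x := by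
  obtain ⟨n, rfl⟩ := Nat.exists_eq_succ_of_ne_zero hn.ne'
  rw [iterate_succ_apply, iterate_succ_apply, backward_apply_alpha hα hIα]

theorem IsLeftStep.exists_iterate_backward_eq (hα : Involutive α)
    (hIα : ∀ x, α x ∈ I ↔ x ∉ I) (hs : IsLeftStep σ α Iᶜ y z) :
    ∃ q, 0 < q ∧ (backward σ α I)^[q] z = y := by
  obtain ⟨q, hq, rfl, hO⟩ := hs
  refine ⟨q, hq, ?_⟩
  rw [← iterate_backward_apply_alpha hα hIα hq]
  exact (backward_eqOn_compl.symm.iterate_apply_eq hO).symm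

theorem isLeftStep_of_iterate_backward_eq (hα : Involutive α) (hIα : ∀ x, α x ∈ I ↔ x ∉ I)
    (hz : z ∈ I) {m : ℕ} (hm : 0 < m) (hy : (backward σ α I)^[m] z = y)
    (hO : ∀ p, 0 < p → p < m → (backward σ α I)^[p] z ∉ I) : IsLeftStep σ α Iᶜ y z := by
  have horbit : ∀ p < m, (backward σ α I)^[p] (α z) ∈ Iᶜ := by
    intro p hp
    rcases p.eq_zero_or_pos with rfl | hp0
    · exact fun h => (hIα z).mp h hz
    · rw [iterate_backward_apply_alpha hα hIα hp0]
      exact hO p hp0 hp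
  have heq : ∀ p ≤ m, (backward σ α I)^[p] (α z) = (⇑σ)^[p] (α z) := fun p hp =>
    backward_eqOn_compl.iterate_apply_eq fun j hj => horbit j (by omega)
  refine ⟨m, hm, ?_, fun p hp => ?_⟩
  · rw [← heq m le_rfl, iterate_backward_apply_alpha hα hIα hm, hy]
  · rw [← heq p hp.le]
    exact horbit p hp

theorem IsLeftPath.exists_iterate_backward_eq (hα : Involutive α)
    (hIα : ∀ x, α x ∈ I ↔ x ∉ I) {k : ℕ} {h : ℕ → X} (hp : IsLeftPath σ α r I Iᶜ k h) :
    ∀ i ≤ k, ∃ n ≥ i, (backward σ α I)^[n] (h i) = r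
  | 0, _ => ⟨0, le_rfl, hp.2.1⟩
  | i + 1, hi => by
    obtain ⟨n, hn, hnr⟩ := hp.exists_iterate_backward_eq hα hIα i (by omega)
    obtain ⟨q, hq, hqi⟩ :=
      (hp.isLeftStep (by omega) hi).exists_iterate_backward_eq hα hIα
    refine ⟨n + q, by omega, ?_⟩
    rw [iterate_add_apply, hqi, Nat.add_sub_cancel, hnr]

theorem IsLeftPath.exists_pos_iterate_backward_eq (hα : Involutive α)
    (hIα : ∀ x, α x ∈ I ↔ x ∉ I) {k : ℕ} {h : ℕ → X} (hp : IsLeftPath σ α r I Iᶜ k h) :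
    ∃ n, 0 < n ∧ (backward σ α I)^[n] (h k) = r := by
  obtain ⟨n, hn, hnr⟩ := hp.exists_iterate_backward_eq hα hIα k le_rfl
  exact ⟨n, by have := hp.1; omega, hnr⟩

theorem exists_isLeftPath_of_isLeast_hittingTimes (hα : Involutive α)
    (hIα : ∀ x, α x ∈ I ↔ x ∉ I) (q : ℕ) :
    ∀ x ∈ I, IsLeast (hittingTimes (backward σ α I) r x) q →
      ∃ (k : ℕ) (h : ℕ → X), IsLeftPath σ α r I Iᶜ k h ∧ h k = x ∧
        ∀ i, 1 ≤ i → i ≤ k → ∃ t < q, h i = (backward σ α I)^[t] x := by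
  induction q using Nat.strong_induction_on with
  | _ q ih =>
  intro x hx hq
  -- `m` is the first time the orbit of `x` meets `I` or reaches `r`
  obtain ⟨m, ⟨hm0, hm⟩, hmin⟩ : ∃ m, IsLeast
      {m | 0 < m ∧ (m = q ∨ (backward σ α I)^[m] x ∈ I)} m :=
    ⟨_, isLeast_csInf (by exact ⟨q, hq.1.1, .inl rfl⟩)⟩
  have hmq : m ≤ q := hmin ⟨hq.1.1, .inl rfl⟩
  have hstep : IsLeftStep σ α Iᶜ ((backward σ α I)^[m] x) x :=
    isLeftStep_of_iterate_backward_eq hα hIα hx hm0 rfl fun p hp0 hpm hpI =>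
      (hmin ⟨hp0, .inr hpI⟩).not_gt hpm
  rcases hmq.lt_or_eq with hmq | rfl
  · obtain ⟨k, h, hp, hk, hiter⟩ := ih (q - m) (by omega) _ (hm.resolve_left hmq.ne)
      (isLeast_hittingTimes_iterate hq hmq)
    have hiter' : ∀ i, 1 ≤ i → i ≤ k → ∃ t, m ≤ t ∧ t < q ∧ h i = (backward σ α I)^[t] x := by
      intro i hi hik
      obtain ⟨t, ht, hti⟩ := hiter i hi hik
      exact ⟨t + m, by omega, by omega, by rw [hti, iterate_add_apply]⟩
    refine ⟨k + 1, _, hp.snoc hx (fun i hi hik hix => ?_) (hk ▸ hstep), by simp, ?_⟩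
    · obtain ⟨t, hmt, htq, hti⟩ := hiter' i hi hik
      exact iterate_ne_self_of_isLeast_hittingTimes hq (by omega) htq (hti ▸ hix)
    · intro i hi hik
      split_ifs with hik'
      · obtain ⟨t, -, htq, hti⟩ := hiter' i hi hik'
        exact ⟨t, htq, hti⟩
      · exact ⟨0, hq.1.1, rfl⟩
  · refine ⟨1, _, isLeftPath_one hx (hq.1.2 ▸ hstep), rfl, fun i hi _ => ?_⟩
    exact ⟨0, hq.1.1, by simp [show i ≠ 0 by omega]⟩

end Backward

theorem left_connected_iff_backward_reaches_root_general {H : Type*}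
    (σ α : Equiv.Perm H) (hmap : IsCombMap σ α) (r : H) (I O : Set H)
    (hpart : I ∪ O = Set.univ) (hdisj : I ∩ O = ∅) (hIO : α '' I = O) :
    (∀ x ∈ I, ∃ (k : ℕ) (h : ℕ → H), IsLeftPath σ α r I O k h ∧ h k = x) ↔
      ∀ x : H, ∃ q : ℕ, 0 < q ∧ (backward σ α I)^[q] x = r := by
  obtain rfl : O = Iᶜ := (IsCompl.of_eq hdisj hpart).compl_eq.symm
  have hα : Involutive α := hmap.2.1
  have hIα : ∀ x, α x ∈ I ↔ x ∉ I := fun x => by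
    rw [← mem_compl_iff, ← hIO, hα.image_eq_preimage_symm]
    rfl
  constructor
  · intro hL x
    by_cases hx : x ∈ I
    · obtain ⟨k, h, hp, rfl⟩ := hL x hx
      exact hp.exists_pos_iterate_backward_eq hα hIα
    · obtain ⟨k, h, hp, hk⟩ := hL (α x) ((hIα x).mpr hx)
      obtain ⟨n, hn, hnr⟩ := hp.exists_pos_iterate_backward_eq hα hIα
      exact ⟨n, hn, by rw [← iterate_backward_apply_alpha hα hIα hn, ← hk, hnr]⟩
  · intro hR x hx
    obtain ⟨k, h, hp, hk, -⟩ :=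
      exists_isLeftPath_of_isLeast_hittingTimes hα hIα _ x hx (isLeast_csInf (hR x))
    exact ⟨k, h, hp, hk⟩

/-- every ingoing half-edge is the extremity of a left-path if and
only if every half-edge reaches the root by iterating the backward function. -/
theorem left_connected_iff_backward_reaches_root {H : Type*} [Fintype H] [Nonempty H]
    (σ α : Equiv.Perm H) (hmap : IsCombMap σ α) (r : H) (I O : Set H)
    (hpart : I ∪ O = Set.univ) (hdisj : I ∩ O = ∅) (hIO : α '' I = O) :
    (∀ x ∈ I, ∃ (k : ℕ) (h : ℕ → H), IsLeftPath σ α r I O k h ∧ h k = x) ↔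
      ∀ x : H, ∃ q : ℕ, 0 < q ∧ (backward σ α I)^[q] x = r :=
  left_connected_iff_backward_reaches_root_general σ α hmap r I O hpart hdisj hIO
end

section
/- Let (σ, α) be a combinatorial map on a nonempty finite set H rooted at r, let S ⊆ H be stable under α with cyclic motion function θ (so that ((σ,α),S) is a covered map), and let (I, O) = Δ((σ,α),S). Then the orientation (I,O) is left-connected: for every h ∈ H there exists an integer q > 0 with β^q(h) = r, where β is the backward function of (I,O). -/
/-- `ordIdx f r h`: the least `k ≥ 0` with `f^[k] r = h` (and `0` if none exists). -/
noncomputable def ordIdx {X : Type*} (f : X → X) (r h : X) : ℕ := by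
  classical
  exact if hex : ∃ k : ℕ, f^[k] r = h then Nat.find hex else 0

/-- The ingoing set `I` of the orientation `Δ((σ,α),S)` of a covered map rooted at `r`:
`h ∈ I` iff either `h ∈ S` and `α h` appears strictly before `h` along the tour of the
motion function started at `r`, or `h ∉ S` and `h` appears strictly before `α h`. -/
noncomputable def deltaI {X : Type*} (σ α : Equiv.Perm X) (S : Set X) (r : X) : Set X :=
  {h | (h ∈ S ∧ ordIdx (motion σ α S) r (α h) < ordIdx (motion σ α S) r h) ∨
       (h ∉ S ∧ ordIdx (motion σ α S) r h < ordIdx (motion σ α S) r (α h))}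

theorem ordIdx_spec' {X : Type*} (f : X → X) (r h : X) (hex : ∃ k : ℕ, f^[k] r = h) :
    f^[ordIdx f r h] r = h := by
  classical
  unfold ordIdx
  rw [dif_pos hex]
  exact Nat.find_spec hex

theorem ordIdx_le' {X : Type*} (f : X → X) (r h : X) {k : ℕ} (hk : f^[k] r = h) :
    ordIdx f r h ≤ k := by
  classical
  unfold ordIdx
  rw [dif_pos ⟨k, hk⟩]
  exact Nat.find_le hk

theorem ordIdx_map_succ' {X : Type*} (f : X → X) (hf : Function.Injective f) (r : X)
    (hex : ∀ h, ∃ k : ℕ, f^[k] r = h) (x : X) (hx : f x ≠ r) :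
    ordIdx f r (f x) = ordIdx f r x + 1 := by
  have h1 : f^[ordIdx f r x + 1] r = f x := by
    rw [Function.iterate_succ_apply', ordIdx_spec' f r x (hex x)]
  have hle := ordIdx_le' f r (f x) h1
  have hspec := ordIdx_spec' f r (f x) (hex (f x))
  have hne0 : ordIdx f r (f x) ≠ 0 := by
    intro h0
    rw [h0] at hspec
    exact hx hspec.symm
  rcases Nat.exists_eq_succ_of_ne_zero hne0 with ⟨j, hj⟩
  rw [hj, Function.iterate_succ_apply'] at hspec
  have hjx : f^[j] r = x := hf hspec
  have := ordIdx_le' f r x hjx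
  omega

/-- the orientation `Δ((σ,α),S)` associated to a covered map is
left-connected. -/
theorem delta_orientation_left_connected {H : Type*} [Fintype H] [Nonempty H]
    (σ α : Equiv.Perm H) (hmap : IsCombMap σ α) (r : H)
    (S : Set H) (hstab : ∀ s ∈ S, α s ∈ S)
    (hcov : IsCyclicFun (motion σ α S)) :
    ∀ h : H, ∃ q : ℕ, 0 < q ∧ (backward σ α (deltaI σ α S r))^[q] h = r := by
  classical
  obtain ⟨hbij, hcyc⟩ := hcov
  obtain ⟨hfp, hinv, -⟩ := hmap
  set θ : H → H := motion σ α S with hθdef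
  set ord : H → ℕ := fun h => ordIdx θ r h with horddef
  set β : H → H := backward σ α (deltaI σ α S r) with hβdef
  have hex : ∀ h, ∃ k : ℕ, θ^[k] r = h := hcyc r
  have hspec : ∀ h, θ^[ord h] r = h := fun h => ordIdx_spec' θ r h (hex h)
  have hordinj : Function.Injective ord := fun a b hab => by
    rw [← hspec a, ← hspec b, hab]
  have hne : ∀ h, ord (α h) ≠ ord h := fun h hh => hfp h (hordinj hh)
  have hSα : ∀ h, h ∈ S ↔ α h ∈ S := by
    intro h
    constructor
    · exact fun hh => hstab h hh
    · intro hh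
      have := hstab _ hh
      rwa [hinv] at this
  have hImem : ∀ h, h ∈ deltaI σ α S r ↔
      ((h ∈ S ∧ ord (α h) < ord h) ∨ (h ∉ S ∧ ord h < ord (α h))) := fun h => Iff.rfl
  have hθS : ∀ h, h ∈ S → θ h = σ (α h) := by
    intro h hh; simp [hθdef, motion, hh]
  have hθnS : ∀ h, h ∉ S → θ h = σ h := by
    intro h hh; simp [hθdef, motion, hh]
  have hβI : ∀ h, h ∈ deltaI σ α S r → β h = σ (α h) := by
    intro h hh; simp [hβdef, backward, hh]
  have hβnI : ∀ h, h ∉ deltaI σ α S r → β h = σ h := by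
    intro h hh; simp [hβdef, backward, hh]
  set m : H → H := fun h => if ord h < ord (α h) then α h else h with hmdef
  -- key computation: β h = θ (m h)
  have hkey : ∀ h, β h = θ (m h) := by
    intro h
    by_cases hS : h ∈ S <;> rcases lt_or_gt_of_ne (hne h) with hlt | hlt
    · -- h ∈ S, ord (α h) < ord h : h ∈ I, m h = h
      have hI : h ∈ deltaI σ α S r := (hImem h).2 (Or.inl ⟨hS, hlt⟩)
      have hm : m h = h := by simp [hmdef]; omega
      rw [hβI h hI, hm, hθS h hS]
    · -- h ∈ S, ord h < ord (α h) : h ∉ I, m h = α h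
      have hI : h ∉ deltaI σ α S r := by
        rw [hImem]; push_neg
        exact ⟨fun _ => by omega, fun hc => absurd hS hc⟩
      have hm : m h = α h := by simp [hmdef]; omega
      rw [hβnI h hI, hm, hθS (α h) ((hSα h).1 hS), hinv]
    · -- h ∉ S, ord (α h) < ord h : h ∉ I, m h = h
      have hI : h ∉ deltaI σ α S r := by
        rw [hImem]; push_neg; constructor <;> intro hc
        · exact absurd hc hS
        · omega
      have hm : m h = h := by simp [hmdef]; omega
      rw [hβnI h hI, hm, hθnS h hS]
    · -- h ∉ S, ord h < ord (α h) : h ∈ I, m h = α h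
      have hI : h ∈ deltaI σ α S r := (hImem h).2 (Or.inr ⟨hS, hlt⟩)
      have hm : m h = α h := by simp [hmdef]; omega
      have hαS : α h ∉ S := fun hc => hS ((hSα h).2 hc)
      rw [hβI h hI, hm, hθnS (α h) hαS]
  have hmax : ∀ x, ord x ≤ ord (m x) := by
    intro x
    simp only [hmdef]
    split <;> omega
  set B : ℕ := Finset.univ.sup ord with hBdef
  have hleB : ∀ x, ord x ≤ B := fun x => Finset.le_sup (f := ord) (Finset.mem_univ x)
  have main : ∀ k : ℕ, ∀ h : H, B - ord (m h) ≤ k → ∃ q : ℕ, 0 < q ∧ β^[q] h = r := by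
    intro k
    induction k with
    | zero =>
      intro h hk
      refine ⟨1, one_pos, ?_⟩
      simp only [Function.iterate_one]
      by_contra hbr
      have hord : ord (β h) = ord (m h) + 1 := by
        rw [hkey h]
        rw [hkey h] at hbr
        exact ordIdx_map_succ' θ hbij.1 r hex (m h) hbr
      have h1 := hleB (β h)
      omega
    | succ n ih =>
      intro h hk
      by_cases hbr : β h = r
      · exact ⟨1, one_pos, by simpa using hbr⟩
      · have hord : ord (β h) = ord (m h) + 1 := by
          rw [hkey h]
          rw [hkey h] at hbr
          exact ordIdx_map_succ' θ hbij.1 r hex (m h) hbr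
        have h1 := hmax (β h)
        have h2 := hleB (m (β h))
        obtain ⟨q, hq, hqr⟩ := ih (β h) (by omega)
        exact ⟨q + 1, Nat.succ_pos q, by rw [Function.iterate_succ_apply]; exact hqr⟩
  intro h
  exact main (B - ord (m h)) h le_rfl
end

section
/- Let (σ, α) be a combinatorial map on a nonempty finite set H rooted at r. Then the assignment S ↦ Δ((σ,α),S) is a bijection from the set of α-stable subsets S ⊆ H whose motion function is a cyclic permutation of H onto the set of left-connected orientations (I,O) of (σ,α) rooted at r. -/
set_option linter.unusedSectionVars false
set_option maxHeartbeats 800000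


theorem motion_pos {X : Type*} {σ α : Equiv.Perm X} {S : Set X} {h : X} (hh : h ∈ S) :
    motion σ α S h = σ (α h) := by rw [motion]; exact if_pos hh

theorem motion_neg {X : Type*} {σ α : Equiv.Perm X} {S : Set X} {h : X} (hh : h ∉ S) :
    motion σ α S h = σ h := by rw [motion]; exact if_neg hh

theorem backward_pos {X : Type*} {σ α : Equiv.Perm X} {I : Set X} {h : X} (hh : h ∈ I) :
    backward σ α I h = σ (α h) := by rw [backward]; exact if_pos hh

theorem backward_neg {X : Type*} {σ α : Equiv.Perm X} {I : Set X} {h : X} (hh : h ∉ I) :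
    backward σ α I h = σ h := by rw [backward]; exact if_neg hh

section Cyclic
variable {H : Type*} [Fintype H] [Nonempty H] {θ : H → H} {r : H}

theorem ordIdx_spec (hcyc : ∀ x y : H, ∃ k : ℕ, θ^[k] x = y) (h : H) :
    θ^[ordIdx θ r h] r = h := by
  classical
  have hex : ∃ k : ℕ, θ^[k] r = h := hcyc r h
  rw [ordIdx]
  simp only [dif_pos hex]
  exact Nat.find_spec hex

omit [Fintype H] [Nonempty H] in
theorem ordIdx_min {k : ℕ} {h : H} (hk : θ^[k] r = h) : ordIdx θ r h ≤ k := by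
  classical
  have hex : ∃ k : ℕ, θ^[k] r = h := ⟨k, hk⟩
  rw [ordIdx]
  simp only [dif_pos hex]
  exact Nat.find_min' hex hk

theorem ordIdx_inj (hcyc : ∀ x y : H, ∃ k : ℕ, θ^[k] x = y) {h h' : H}
    (e : ordIdx θ r h = ordIdx θ r h') : h = h' := by
  have h1 := ordIdx_spec (r := r) hcyc h
  have h2 := ordIdx_spec (r := r) hcyc h'
  rw [e] at h1; rw [h1] at h2; exact h2

theorem card_le_period (hcyc : ∀ x y : H, ∃ k : ℕ, θ^[k] x = y)
    {p : ℕ} (hp : 0 < p) (hfix : θ^[p] r = r) :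
    Fintype.card H ≤ p := by
  have hmod : ∀ a : ℕ, θ^[a] r = θ^[a % p] r := by
    intro a
    conv_lhs => rw [← Nat.mod_add_div a p]
    rw [Function.iterate_add_apply, Function.iterate_mul]
    congr 1
    exact Function.iterate_fixed hfix _
  have hlt : ∀ h : H, ordIdx θ r h < p := by
    intro h
    have : θ^[ordIdx θ r h % p] r = h := by
      rw [← hmod]; exact ordIdx_spec hcyc h
    exact lt_of_le_of_lt (ordIdx_min this) (Nat.mod_lt _ hp)
  have : Function.Injective (fun h : H => (⟨ordIdx θ r h, hlt h⟩ : Fin p)) := by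
    intro a b hab
    exact ordIdx_inj hcyc (by simpa using congrArg Fin.val hab)
  simpa using Fintype.card_le_of_injective _ this

theorem iterate_card_eq (hbij : Function.Bijective θ)
    (hcyc : ∀ x y : H, ∃ k : ℕ, θ^[k] x = y) : θ^[Fintype.card H] r = r := by
  classical
  set n := Fintype.card H with hn
  have hpos : 0 < n := Fintype.card_pos
  have hni : ¬ Function.Injective (fun k : Fin (n+1) => θ^[(k:ℕ)] r) := by
    intro hinj
    have := Fintype.card_le_of_injective _ hinj
    simp [hn] at this
  rw [Function.not_injective_iff] at hni
  obtain ⟨a, b, hab, hne⟩ := hni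
  wlog hlt : (b:ℕ) < (a:ℕ) generalizing a b
  · exact this b a hab.symm (Ne.symm hne) (by omega)
  have hcancel : θ^[(a:ℕ) - (b:ℕ)] r = r := by
    have hinj2 : Function.Injective (θ^[(b:ℕ)]) := Function.Injective.iterate hbij.1 _
    apply hinj2
    rw [← Function.iterate_add_apply, Nat.add_sub_cancel' (le_of_lt hlt)]
    exact hab
  have h1 : n ≤ (a:ℕ) - (b:ℕ) := card_le_period hcyc (by omega) hcancel
  have h2 : (a:ℕ) - (b:ℕ) ≤ n := by have := a.isLt; omega
  have h3 : (a:ℕ) - (b:ℕ) = n := le_antisymm h2 h1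
  rw [← h3]; exact hcancel

theorem ordIdx_lt (hbij : Function.Bijective θ)
    (hcyc : ∀ x y : H, ∃ k : ℕ, θ^[k] x = y) (h : H) :
    ordIdx θ r h < Fintype.card H := by
  have hmod : θ^[ordIdx θ r h % Fintype.card H] r = h := by
    conv_rhs => rw [← ordIdx_spec (r := r) hcyc h]
    conv_rhs => rw [← Nat.mod_add_div (ordIdx θ r h) (Fintype.card H)]
    rw [Function.iterate_add_apply, Function.iterate_mul,
      Function.iterate_fixed (iterate_card_eq hbij hcyc) _]
  exact lt_of_le_of_lt (ordIdx_min hmod) (Nat.mod_lt _ Fintype.card_pos)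

theorem iterate_inj_lt (hbij : Function.Bijective θ)
    (hcyc : ∀ x y : H, ∃ k : ℕ, θ^[k] x = y)
    {i j : ℕ} (hi : i < Fintype.card H) (hj : j < Fintype.card H)
    (he : θ^[i] r = θ^[j] r) : i = j := by
  by_contra hne
  wlog hlt : i < j generalizing i j
  · exact this hj hi he.symm (Ne.symm hne) (by omega)
  have hcancel : θ^[j - i] r = r := by
    have hinj2 : Function.Injective (θ^[i]) := Function.Injective.iterate hbij.1 _
    apply hinj2
    rw [← Function.iterate_add_apply, Nat.add_sub_cancel' (le_of_lt hlt)]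
    exact he.symm
  have := card_le_period (r := r) hcyc (p := j - i) (by omega) hcancel
  omega

theorem ordIdx_iterate (hbij : Function.Bijective θ)
    (hcyc : ∀ x y : H, ∃ k : ℕ, θ^[k] x = y)
    {k : ℕ} (hk : k < Fintype.card H) : ordIdx θ r (θ^[k] r) = k :=
  iterate_inj_lt hbij hcyc (ordIdx_lt hbij hcyc _) hk (ordIdx_spec hcyc _)

theorem ordIdx_succ (hbij : Function.Bijective θ)
    (hcyc : ∀ x y : H, ∃ k : ℕ, θ^[k] x = y)
    {x : H} (hx : θ x ≠ r) : ordIdx θ r (θ x) = ordIdx θ r x + 1 := by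
  have hle : ordIdx θ r (θ x) ≤ ordIdx θ r x + 1 :=
    ordIdx_min (by rw [Function.iterate_succ_apply', ordIdx_spec hcyc])
  rcases Nat.eq_zero_or_pos (ordIdx θ r (θ x)) with h0 | hpos
  · exfalso; apply hx
    have := ordIdx_spec (r := r) hcyc (θ x)
    rw [h0] at this; exact this.symm
  · have hspec := ordIdx_spec (r := r) hcyc (θ x)
    have h1 : θ^[ordIdx θ r (θ x) - 1] r = x := by
      apply hbij.1
      rw [← Function.iterate_succ_apply' θ, Nat.succ_eq_add_one, Nat.sub_add_cancel hpos]
      exact hspec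
    have := ordIdx_min h1
    omega

end Cyclic

section Forward
variable {H : Type*} [Fintype H] [Nonempty H]

theorem mem_S_iff_alpha (α : Equiv.Perm H) (S : Set H)
    (hα2 : ∀ h, α (α h) = h) (hS : ∀ s ∈ S, α s ∈ S) (h : H) : h ∈ S ↔ α h ∈ S :=
  ⟨fun hh => hS h hh, fun hh => by have := hS _ hh; rwa [hα2] at this⟩

theorem ord_alpha_ne (σ α : Equiv.Perm H) (S : Set H) (r : H)
    (hα1 : ∀ h, α h ≠ h)
    (hcyc : ∀ x y : H, ∃ k : ℕ, (motion σ α S)^[k] x = y) (h : H) :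
    ordIdx (motion σ α S) r (α h) ≠ ordIdx (motion σ α S) r h :=
  fun e => hα1 h (ordIdx_inj hcyc e)

theorem mem_deltaI_iff_alpha (σ α : Equiv.Perm H) (S : Set H) (r : H)
    (hα1 : ∀ h, α h ≠ h) (hα2 : ∀ h, α (α h) = h) (hS : ∀ s ∈ S, α s ∈ S)
    (hcyc : ∀ x y : H, ∃ k : ℕ, (motion σ α S)^[k] x = y) (h : H) :
    h ∈ deltaI σ α S r ↔ α h ∉ deltaI σ α S r := by
  have hne := ord_alpha_ne σ α S r hα1 hcyc h
  have hmem := mem_S_iff_alpha α S hα2 hS h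
  simp only [deltaI, Set.mem_setOf_eq, hα2]
  constructor
  · rintro (⟨h1, h2⟩ | ⟨h1, h2⟩) <;> rintro (⟨h3, h4⟩ | ⟨h3, h4⟩) <;> first | omega | tauto
  · intro hcon
    rcases lt_or_gt_of_ne hne with hlt | hgt
    · by_cases hhS : h ∈ S
      · exact Or.inl ⟨hhS, hlt⟩
      · exact absurd (Or.inr ⟨fun c => hhS (hmem.mpr c), hlt⟩) hcon
    · by_cases hhS : h ∈ S
      · exact absurd (Or.inl ⟨hmem.mp hhS, hgt⟩) hcon
      · exact Or.inr ⟨hhS, hgt⟩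

theorem deltaI_orientation (σ α : Equiv.Perm H) (S : Set H) (r : H)
    (hα1 : ∀ h, α h ≠ h) (hα2 : ∀ h, α (α h) = h) (hS : ∀ s ∈ S, α s ∈ S)
    (hcyc : ∀ x y : H, ∃ k : ℕ, (motion σ α S)^[k] x = y) :
    α '' deltaI σ α S r = (deltaI σ α S r)ᶜ := by
  ext x
  constructor
  · rintro ⟨y, hy, rfl⟩
    exact (mem_deltaI_iff_alpha σ α S r hα1 hα2 hS hcyc y).mp hy
  · intro hx
    refine ⟨α x, ?_, hα2 x⟩
    have h1 := mem_deltaI_iff_alpha σ α S r hα1 hα2 hS hcyc (α x)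
    rw [hα2] at h1
    exact h1.mpr hx

theorem backward_deltaI_eq (σ α : Equiv.Perm H) (S : Set H) (r : H)
    (hα1 : ∀ h, α h ≠ h) (hα2 : ∀ h, α (α h) = h) (hS : ∀ s ∈ S, α s ∈ S)
    (hcyc : ∀ x y : H, ∃ k : ℕ, (motion σ α S)^[k] x = y) (h : H) :
    ∃ x : H, backward σ α (deltaI σ α S r) h = motion σ α S x ∧
      ordIdx (motion σ α S) r h ≤ ordIdx (motion σ α S) r x := by
  have hne := ord_alpha_ne σ α S r hα1 hcyc h
  by_cases hI : h ∈ deltaI σ α S r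
  · have hb := backward_pos (σ := σ) (α := α) hI
    rcases hI with ⟨hhS, hlt⟩ | ⟨hhS, hlt⟩
    · exact ⟨h, by rw [hb, motion_pos hhS], le_refl _⟩
    · refine ⟨α h, ?_, le_of_lt hlt⟩
      rw [hb, motion_neg (fun c => hhS ((mem_S_iff_alpha α S hα2 hS h).mpr c))]
  · have hb := backward_neg (σ := σ) (α := α) hI
    by_cases hhS : h ∈ S
    · have hlt : ordIdx (motion σ α S) r h < ordIdx (motion σ α S) r (α h) := by
        rcases lt_or_gt_of_ne hne with hlt | hgt
        · exact absurd (Or.inl ⟨hhS, hlt⟩) hI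
        · exact hgt
      refine ⟨α h, ?_, le_of_lt hlt⟩
      rw [hb, motion_pos (hS h hhS), hα2]
    · exact ⟨h, by rw [hb, motion_neg hhS], le_refl _⟩

theorem deltaI_left_connected (σ α : Equiv.Perm H) (S : Set H) (r : H)
    (hα1 : ∀ h, α h ≠ h) (hα2 : ∀ h, α (α h) = h) (hS : ∀ s ∈ S, α s ∈ S)
    (hbij : Function.Bijective (motion σ α S))
    (hcyc : ∀ x y : H, ∃ k : ℕ, (motion σ α S)^[k] x = y) (h : H) :
    ∃ q : ℕ, 0 < q ∧ (backward σ α (deltaI σ α S r))^[q] h = r := by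
  have key : ∀ d : ℕ, ∀ h : H, Fintype.card H - 1 - ordIdx (motion σ α S) r h ≤ d →
      ∃ q : ℕ, 0 < q ∧ (backward σ α (deltaI σ α S r))^[q] h = r := by
    intro d
    induction d with
    | zero =>
      intro h hd
      obtain ⟨x, hx, hle⟩ := backward_deltaI_eq σ α S r hα1 hα2 hS hcyc h
      have hxlt := ordIdx_lt (r := r) hbij hcyc x
      have hhlt := ordIdx_lt (r := r) hbij hcyc h
      refine ⟨1, one_pos, ?_⟩
      rw [Function.iterate_one, hx]
      by_contra hc
      have h5 := ordIdx_succ (r := r) hbij hcyc (x := x) hc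
      have h6 := ordIdx_lt (r := r) hbij hcyc (motion σ α S x)
      omega
    | succ d ih =>
      intro h hd
      obtain ⟨x, hx, hle⟩ := backward_deltaI_eq σ α S r hα1 hα2 hS hcyc h
      by_cases hc : motion σ α S x = r
      · exact ⟨1, one_pos, by rw [Function.iterate_one, hx, hc]⟩
      · have hsucc := ordIdx_succ (r := r) hbij hcyc (x := x) hc
        have h1 : ordIdx (motion σ α S) r (backward σ α (deltaI σ α S r) h)
            = ordIdx (motion σ α S) r x + 1 := by rw [hx]; exact hsucc
        have h2 := ordIdx_lt (r := r) hbij hcyc (backward σ α (deltaI σ α S r) h)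
        obtain ⟨q, hq, hqr⟩ := ih (backward σ α (deltaI σ α S r) h) (by omega)
        exact ⟨q + 1, by omega, by rw [Function.iterate_succ_apply, hqr]⟩
  exact key (Fintype.card H) h (by omega)

end Forward

section Inj
variable {H : Type*} [Fintype H] [Nonempty H]

theorem mem_S_iff_delta (σ α : Equiv.Perm H) (S : Set H) (r : H)
    (hα1 : ∀ h, α h ≠ h)
    (hcyc : ∀ x y : H, ∃ k : ℕ, (motion σ α S)^[k] x = y) (h : H) :
    h ∈ S ↔ (h ∈ deltaI σ α S r ↔
      ordIdx (motion σ α S) r (α h) < ordIdx (motion σ α S) r h) := by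
  have hne := ord_alpha_ne σ α S r hα1 hcyc h
  simp only [deltaI, Set.mem_setOf_eq]
  by_cases hhS : h ∈ S <;> simp [hhS] <;> omega

theorem delta_inj (σ α : Equiv.Perm H) (S S' : Set H) (r : H)
    (hα1 : ∀ h, α h ≠ h)
    (hbij : Function.Bijective (motion σ α S))
    (hcyc : ∀ x y : H, ∃ k : ℕ, (motion σ α S)^[k] x = y)
    (hbij' : Function.Bijective (motion σ α S'))
    (hcyc' : ∀ x y : H, ∃ k : ℕ, (motion σ α S')^[k] x = y)
    (heq : deltaI σ α S r = deltaI σ α S' r) : S = S' := by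
  set n := Fintype.card H with hn
  -- the two tours agree
  have hiter : ∀ k, k ≤ n → (motion σ α S)^[k] r = (motion σ α S')^[k] r := by
    intro k
    induction k using Nat.strong_induction_on with
    | _ k ih =>
      match k with
      | 0 => intro _; rfl
      | (m+1) =>
        intro hk
        have hm := ih m (by omega) (by omega)
        set h := (motion σ α S)^[m] r with hh
        have ord1 : ordIdx (motion σ α S) r h = m := ordIdx_iterate hbij hcyc (by omega)
        have ord2 : ordIdx (motion σ α S') r h = m := by
          have := ordIdx_iterate (r := r) hbij' hcyc' (k := m) (by omega)
          rwa [← hm] at this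
        have hcl : ordIdx (motion σ α S) r (α h) < m ↔
            ordIdx (motion σ α S') r (α h) < m := by
          constructor
          · intro hlt
            have hsp := ordIdx_spec (r := r) hcyc (α h)
            have := ih (ordIdx (motion σ α S) r (α h)) (by omega) (by omega)
            rw [this] at hsp
            exact lt_of_le_of_lt (ordIdx_min hsp) hlt
          · intro hlt
            have hsp := ordIdx_spec (r := r) hcyc' (α h)
            have := ih (ordIdx (motion σ α S') r (α h)) (by omega) (by omega)
            rw [← this] at hsp
            exact lt_of_le_of_lt (ordIdx_min hsp) hlt
        have hmemiff : h ∈ S ↔ h ∈ S' := by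
          rw [mem_S_iff_delta σ α S r hα1 hcyc h, mem_S_iff_delta σ α S' r hα1 hcyc' h,
            ord1, ord2, heq, hcl]
        have hstep : motion σ α S h = motion σ α S' h := by
          by_cases hmem : h ∈ S
          · rw [motion_pos hmem, motion_pos (hmemiff.mp hmem)]
          · rw [motion_neg hmem, motion_neg (fun c => hmem (hmemiff.mpr c))]
        rw [Function.iterate_succ_apply', Function.iterate_succ_apply', ← hm, ← hh, hstep]
  ext h
  have ha := ordIdx_lt (r := r) hbij hcyc h
  have hb := ordIdx_lt (r := r) hbij hcyc (α h)
  have hsp := ordIdx_spec (r := r) hcyc h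
  have hsp2 := ordIdx_spec (r := r) hcyc (α h)
  have e1 : ordIdx (motion σ α S') r h = ordIdx (motion σ α S) r h := by
    have := hiter (ordIdx (motion σ α S) r h) (by omega)
    rw [this] at hsp
    have := ordIdx_iterate (r := r) hbij' hcyc' (k := ordIdx (motion σ α S) r h) (by omega)
    rwa [hsp] at this
  have e2 : ordIdx (motion σ α S') r (α h) = ordIdx (motion σ α S) r (α h) := by
    have := hiter (ordIdx (motion σ α S) r (α h)) (by omega)
    rw [this] at hsp2
    have := ordIdx_iterate (r := r) hbij' hcyc' (k := ordIdx (motion σ α S) r (α h)) (by omega)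
    rwa [hsp2] at this
  rw [mem_S_iff_delta σ α S r hα1 hcyc h, mem_S_iff_delta σ α S' r hα1 hcyc' h,
    e1, e2, heq]

end Inj

open Classical in
noncomputable def tourAux {H : Type*} (σ α : H → H) (I : Set H) (r : H) : ℕ → H × List H
  | 0 => (r, [])
  | (k+1) =>
    let p := tourAux σ α I r k
    (if (p.1 ∈ I) ↔ (α p.1 ∈ p.2) then σ (α p.1) else σ p.1, p.1 :: p.2)

section Tour
variable {H : Type*} (σ α : H → H) (I : Set H) (r : H)

theorem tourAux_zero : tourAux σ α I r 0 = (r, []) := rfl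

open Classical in
theorem tourAux_succ (k : ℕ) : tourAux σ α I r (k+1) =
    (if ((tourAux σ α I r k).1 ∈ I) ↔ (α (tourAux σ α I r k).1 ∈ (tourAux σ α I r k).2)
      then σ (α (tourAux σ α I r k).1) else σ (tourAux σ α I r k).1,
      (tourAux σ α I r k).1 :: (tourAux σ α I r k).2) := rfl

theorem tourAux_vis (k : ℕ) (x : H) :
    x ∈ (tourAux σ α I r k).2 ↔ ∃ j, j < k ∧ (tourAux σ α I r j).1 = x := by
  induction k with
  | zero => simp [tourAux_zero]
  | succ k ih =>
    rw [tourAux_succ]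
    simp only [List.mem_cons, ih]
    constructor
    · rintro (rfl | ⟨j, hj, rfl⟩)
      · exact ⟨k, by omega, rfl⟩
      · exact ⟨j, by omega, rfl⟩
    · rintro ⟨j, hj, rfl⟩
      rcases Nat.lt_succ_iff_lt_or_eq.mp hj with hj' | rfl
      · exact Or.inr ⟨j, hj', rfl⟩
      · exact Or.inl rfl

theorem tourAux_stepA (k : ℕ)
    (hc : ((tourAux σ α I r k).1 ∈ I) ↔ (α (tourAux σ α I r k).1 ∈ (tourAux σ α I r k).2)) :
    (tourAux σ α I r (k+1)).1 = σ (α (tourAux σ α I r k).1) := by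
  rw [tourAux_succ]; exact if_pos hc

theorem tourAux_stepB (k : ℕ)
    (hc : ¬(((tourAux σ α I r k).1 ∈ I) ↔ (α (tourAux σ α I r k).1 ∈ (tourAux σ α I r k).2))) :
    (tourAux σ α I r (k+1)).1 = σ (tourAux σ α I r k).1 := by
  rw [tourAux_succ]; exact if_neg hc

end Tour

theorem delta_surj {H : Type*} [Fintype H] [Nonempty H] (σ α : Equiv.Perm H) (r : H)
    (hα2 : ∀ h, α (α h) = h)
    (I : Set H) (hI : ∀ h, h ∈ I ↔ α h ∉ I)
    (hconn : ∀ h, ∃ q, 0 < q ∧ (backward σ α I)^[q] h = r) :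
    ∃ S : Set H, (∀ s ∈ S, α s ∈ S) ∧ IsCyclicFun (motion σ α S) ∧ deltaI σ α S r = I := by
  classical
  have hα1 : ∀ h : H, α h ≠ h := fun h e => by
    have := hI h; rw [e] at this; tauto
  set n := Fintype.card H with hn
  have hnpos : 0 < n := Fintype.card_pos
  set t : ℕ → H := fun k => (tourAux (⇑σ) (⇑α) I r k).1 with ht
  set V : ℕ → List H := fun k => (tourAux (⇑σ) (⇑α) I r k).2 with hV
  have t0 : t 0 = r := rfl
  have hvis : ∀ k x, x ∈ V k ↔ ∃ j, j < k ∧ t j = x := fun k x => tourAux_vis _ _ I r k x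
  have stepA : ∀ k, ((t k ∈ I) ↔ (α (t k) ∈ V k)) → t (k+1) = σ (α (t k)) :=
    fun k hc => tourAux_stepA _ _ I r k hc
  have stepB : ∀ k, ¬((t k ∈ I) ↔ (α (t k) ∈ V k)) → t (k+1) = σ (t k) :=
    fun k hc => tourAux_stepB _ _ I r k hc
  -- existence of a repeat
  have hrep : ∃ j, 0 < j ∧ ∃ i, i < j ∧ t i = t j := by
    have hni : ¬ Function.Injective (fun k : Fin (n+1) => t k) := by
      intro hinj
      have := Fintype.card_le_of_injective _ hinj
      simp [hn] at this
    rw [Function.not_injective_iff] at hni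
    obtain ⟨a, b, hab, hne⟩ := hni
    rcases Nat.lt_or_ge (a : ℕ) (b : ℕ) with hlt | hge
    · exact ⟨b, by omega, a, hlt, hab⟩
    · have hba : (b:ℕ) < (a:ℕ) := by
        rcases Nat.lt_or_ge (b:ℕ) (a:ℕ) with h | h
        · exact h
        · exact absurd (Fin.ext (by omega)) hne
      exact ⟨a, by omega, b, hba, hab.symm⟩
  set j₀ := Nat.find hrep with hj₀
  obtain ⟨hj0pos, i, hij, hti⟩ := Nat.find_spec hrep
  have hinj : ∀ a b, a < b → b < j₀ → t a ≠ t b := by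
    intro a b hab hbj he
    exact Nat.find_min hrep hbj ⟨by omega, a, hab, he⟩
  -- the first repeat happens at the root
  have hi0 : i = 0 := by
    by_contra hi
    have hi1 : 1 ≤ i := by omega
    set a := i - 1 with ha
    set b := j₀ - 1 with hb
    have hia : i = a + 1 := by omega
    have hjb : j₀ = b + 1 := by omega
    have hab : a < b := by omega
    have hbj : b < j₀ := by omega
    have haj : a < j₀ := by omega
    have hstep : t (a+1) = t (b+1) := by rw [← hia, ← hjb]; exact hti
    by_cases Ca : (t a ∈ I) ↔ (α (t a) ∈ V a) <;>
      by_cases Cb : (t b ∈ I) ↔ (α (t b) ∈ V b)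
    · -- both σ∘α steps
      rw [stepA a Ca, stepA b Cb] at hstep
      have h1 : α (t a) = α (t b) := σ.injective hstep
      have h2 : t a = t b := by rw [← hα2 (t a), h1, hα2]
      exact hinj a b hab hbj h2
    · -- Ca, ¬Cb
      rw [stepA a Ca, stepB b Cb] at hstep
      have h1 : α (t a) = t b := σ.injective hstep
      have hnv : α (t a) ∉ V a := by
        intro hv
        obtain ⟨c, hc, hce⟩ := (hvis a _).mp hv
        exact hinj c b (by omega) hbj (by rw [hce, h1])
      have htaI : t a ∉ I := fun hIa => hnv (Ca.mp hIa)
      have he2 : α (t b) = t a := by rw [← h1, hα2]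
      have hvb : α (t b) ∈ V b := (hvis b _).mpr ⟨a, hab, he2.symm⟩
      have htbI : t b ∉ I := fun hIb => Cb ⟨fun _ => hvb, fun _ => hIb⟩
      apply htbI
      rw [← h1]
      by_contra hc
      exact htaI ((hI (t a)).mpr hc)
    · -- ¬Ca, Cb
      rw [stepB a Ca, stepA b Cb] at hstep
      have h1 : t a = α (t b) := σ.injective hstep
      have h2 : α (t a) = t b := by rw [h1, hα2]
      have hnv : α (t a) ∉ V a := by
        intro hv
        obtain ⟨c, hc, hce⟩ := (hvis a _).mp hv
        exact hinj c b (by omega) hbj (by rw [hce, h2])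
      have htaI : t a ∈ I := by
        by_contra hc
        exact Ca ⟨fun h => absurd h hc, fun hv => absurd hv hnv⟩
      have htbI : t b ∈ I := Cb.mpr ((hvis b _).mpr ⟨a, hab, h1⟩)
      apply (hI (t a)).mp htaI
      rw [h2]
      exact htbI
    · -- neither
      rw [stepB a Ca, stepB b Cb] at hstep
      exact hinj a b hab hbj (σ.injective hstep)
  have htj0 : t j₀ = r := by rw [hi0] at hti; rw [← hti, t0]
  -- the unvisited set is closed under the backward function
  have hout : ∀ y, (¬ ∃ m, m < j₀ ∧ t m = y) → ¬ ∃ m, m < j₀ ∧ t m = backward σ α I y := by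
    rintro y hy ⟨m, hm, hmy⟩
    set m' := if m = 0 then j₀ else m with hm'
    have hm'pos : 0 < m' := by rw [hm']; split <;> omega
    have hm'le : m' ≤ j₀ := by rw [hm']; split <;> omega
    have htm' : t m' = backward σ α I y := by
      rw [hm']; split
      · rename_i h0; rw [htj0, ← hmy, h0, t0]
      · exact hmy
    set a := m' - 1 with haa
    have ham : a + 1 = m' := by omega
    have haj : a < j₀ := by omega
    have hyv : ∀ c, c < j₀ → t c ≠ y := fun c hc he => hy ⟨c, hc, he⟩
    have hyva : y ∉ V a := by
      intro hv
      obtain ⟨c, hc, hce⟩ := (hvis a y).mp hv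
      exact hyv c (by omega) hce
    by_cases hyI : y ∈ I <;> by_cases Ca : (t a ∈ I) ↔ (α (t a) ∈ V a)
    · -- y ∈ I, step σ∘α : α y = α (t a) so y = t a, visited, contradiction
      have e : σ (α y) = σ (α (t a)) := by
        rw [← backward_pos hyI, ← htm', ← ham]; exact stepA a Ca
      have h1 : y = t a := by
        have h2 := σ.injective e
        rw [← hα2 y, h2, hα2]
      exact hyv a haj h1.symm
    · -- y ∈ I, plain step : α y = t a
      have e : σ (α y) = σ (t a) := by
        rw [← backward_pos hyI, ← htm', ← ham]; exact stepB a Ca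
      have hta : α y = t a := σ.injective e
      have h1 : α y ∈ I := by
        by_contra hc
        apply Ca
        rw [← hta]
        exact ⟨fun h => absurd h hc, fun hv => absurd (by rwa [hα2] at hv) hyva⟩
      exact ((hI y).mp hyI) h1
    · -- y ∉ I, step σ∘α : y = α (t a)
      have e : σ y = σ (α (t a)) := by
        rw [← backward_neg hyI, ← htm', ← ham]; exact stepA a Ca
      have hy1 : y = α (t a) := σ.injective e
      have hta : α y = t a := by rw [hy1, hα2]
      have h1 : t a ∉ I := by
        intro h
        have h2 := Ca.mp h
        rw [← hta, hα2] at h2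
        exact hyva h2
      apply hyI
      apply (hI y).mpr
      rw [hta]
      exact h1
    · -- y ∉ I, plain step : y = t a, visited, contradiction
      have e : σ y = σ (t a) := by
        rw [← backward_neg hyI, ← htm', ← ham]; exact stepB a Ca
      exact hyv a haj (σ.injective e).symm
  have hiterout : ∀ q y, (¬ ∃ m, m < j₀ ∧ t m = y) →
      ¬ ∃ m, m < j₀ ∧ t m = (backward σ α I)^[q] y := by
    intro q
    induction q with
    | zero => intro y hy; simpa using hy
    | succ q ih =>
      intro y hy
      rw [Function.iterate_succ_apply]
      exact ih _ (hout y hy)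
  have hcover : ∀ y, ∃ m, m < j₀ ∧ t m = y := by
    intro y
    by_contra hy
    obtain ⟨q, hq, hqr⟩ := hconn y
    exact hiterout q y hy ⟨0, hj0pos, by rw [t0, hqr]⟩
  have hbij0 : Function.Bijective (fun a : Fin j₀ => t a) := by
    constructor
    · intro a b he
      by_contra hne
      have hne' : (a:ℕ) ≠ (b:ℕ) := fun e => hne (Fin.ext e)
      rcases Nat.lt_or_ge (a:ℕ) (b:ℕ) with h | h
      · exact hinj a b h b.isLt he
      · exact hinj b a (by omega) a.isLt he.symm
    · intro y
      obtain ⟨m, hm, hme⟩ := hcover y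
      exact ⟨⟨m, hm⟩, hme⟩
  have hj0n : j₀ = n := by
    have := Fintype.card_of_bijective hbij0
    simpa [hn] using this
  have tinj : ∀ a b, a < b → b < n → t a ≠ t b := by
    rw [← hj0n]; exact hinj
  have tn : t n = r := by rw [← hj0n]; exact htj0
  have tcov : ∀ y, ∃ m, m < n ∧ t m = y := by rw [← hj0n]; exact hcover
  have hidx : ∀ k j, k < n → j < n → t j = t k → j = k := by
    intro k j hk hj he
    rcases Nat.lt_trichotomy j k with h | h | h
    · exact absurd he (tinj j k h hk)
    · exact h
    · exact absurd he.symm (tinj k j h hj)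
  set S : Set H := {y | ∃ k, k < n ∧ t k = y ∧ ((t k ∈ I) ↔ (α (t k) ∈ V k))} with hSdef
  have memS : ∀ k, k < n → ((t k ∈ S) ↔ ((t k ∈ I) ↔ (α (t k) ∈ V k))) := by
    intro k hk
    constructor
    · rintro ⟨k', hk', he, hc⟩
      have he' : k' = k := hidx k k' hk hk' he
      rwa [he'] at hc
    · intro hc
      exact ⟨k, hk, rfl, hc⟩
  have θstep : ∀ k, k < n → motion σ α S (t k) = t (k+1) := by
    intro k hk
    by_cases hc : (t k ∈ I) ↔ (α (t k) ∈ V k)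
    · rw [motion_pos ((memS k hk).mpr hc), ← stepA k hc]
    · rw [motion_neg (fun c => hc ((memS k hk).mp c)), ← stepB k hc]
  have θiter : ∀ a m, a + m ≤ n → (motion σ α S)^[m] (t a) = t (a + m) := by
    intro a m
    induction m with
    | zero => intro _; rfl
    | succ m ih =>
      intro hm
      rw [Function.iterate_succ_apply', ih (by omega), θstep (a+m) (by omega)]
      rfl
  have θr : ∀ k, k ≤ n → (motion σ α S)^[k] r = t k := by
    intro k hk
    have h1 := θiter 0 k (by omega)
    rwa [t0, Nat.zero_add] at h1
  have hsurj : Function.Surjective (motion σ α S) := by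
    intro y
    obtain ⟨m, hm, rfl⟩ := tcov y
    rcases Nat.eq_zero_or_pos m with rfl | hmp
    · refine ⟨t (n-1), ?_⟩
      rw [θstep (n-1) (by omega)]
      have hne : n - 1 + 1 = n := by omega
      rw [hne, tn, t0]
    · refine ⟨t (m-1), ?_⟩
      rw [θstep (m-1) (by omega)]
      congr 1
      omega
  have hbijS : Function.Bijective (motion σ α S) := Finite.surjective_iff_bijective.mp hsurj
  have hcycS : ∀ x y : H, ∃ k : ℕ, (motion σ α S)^[k] x = y := by
    intro x y
    obtain ⟨a, haa, rfl⟩ := tcov x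
    obtain ⟨b, hbb, rfl⟩ := tcov y
    refine ⟨b + (n - a), ?_⟩
    rw [Function.iterate_add_apply]
    have h1 : (motion σ α S)^[n-a] (t a) = r := by
      have h2 := θiter a (n - a) (by omega)
      have h3 : a + (n - a) = n := by omega
      rw [h2, h3, tn]
    rw [h1, θr b (by omega)]
  have hstab : ∀ s ∈ S, α s ∈ S := by
    rintro s ⟨k, hk, rfl, hc⟩
    obtain ⟨m, hm, hme⟩ := tcov (α (t k))
    have hkm : m ≠ k := by
      intro e; rw [e] at hme; exact hα1 (t k) hme.symm
    have hv1 : (α (t k) ∈ V k) ↔ m < k := by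
      rw [hvis]
      constructor
      · rintro ⟨j, hj, hje⟩
        have hjm : j = m := hidx m j hm (by omega) (by rw [hje, hme])
        omega
      · intro h; exact ⟨m, h, hme⟩
    have hmk : α (t m) = t k := by rw [hme, hα2]
    have hv2 : (α (t m) ∈ V m) ↔ k < m := by
      rw [hvis]
      constructor
      · rintro ⟨j, hj, hje⟩
        have hjk : j = k := hidx k j hk (by omega) (by rw [hje, hmk])
        omega
      · intro h; exact ⟨k, h, hmk.symm⟩
    rw [hv1] at hc
    have hCm : (t m ∈ I) ↔ (α (t m) ∈ V m) := by
      rw [hv2, hme]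
      have hIk := hI (t k)
      constructor
      · intro hα
        by_contra hlt
        have hmltk : m < k := by omega
        exact (hIk.mp (hc.mpr hmltk)) hα
      · intro hlt
        by_contra hα
        have htk : t k ∉ I := fun htk => by have := hc.mp htk; omega
        exact htk (hIk.mpr hα)
    exact ⟨m, hm, hme, hCm⟩
  have hord : ∀ k, k < n → ordIdx (motion σ α S) r (t k) = k := by
    intro k hk
    have h1 := ordIdx_iterate (r := r) hbijS hcycS (k := k) hk
    rwa [θr k (by omega)] at h1
  have hdelta : deltaI σ α S r = I := by
    ext y
    obtain ⟨k, hk, rfl⟩ := tcov y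
    obtain ⟨m, hm, hme⟩ := tcov (α (t k))
    have hkm : m ≠ k := by
      intro e; rw [e] at hme; exact hα1 (t k) hme.symm
    have o1 : ordIdx (motion σ α S) r (t k) = k := hord k hk
    have o2 : ordIdx (motion σ α S) r (α (t k)) = m := by rw [← hme]; exact hord m hm
    have hv1 : (α (t k) ∈ V k) ↔ m < k := by
      rw [hvis]
      constructor
      · rintro ⟨j, hj, hje⟩
        have hjm : j = m := hidx m j hm (by omega) (by rw [hje, hme])
        omega
      · intro h; exact ⟨m, h, hme⟩
    have hmemS : (t k ∈ S) ↔ ((t k ∈ I) ↔ m < k) := by rw [memS k hk, hv1]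
    simp only [deltaI, Set.mem_setOf_eq, o1, o2]
    rcases Nat.lt_or_ge m k with h | h
    · constructor
      · rintro (⟨hsS, _⟩ | ⟨_, hkm'⟩)
        · exact (hmemS.mp hsS).mpr h
        · omega
      · intro hIy
        exact Or.inl ⟨hmemS.mpr (iff_of_true hIy h), h⟩
    · have hlt : k < m := by omega
      constructor
      · rintro (⟨_, hmk'⟩ | ⟨hsS, _⟩)
        · omega
        · by_contra hIy
          exact hsS (hmemS.mpr ⟨fun hh => absurd hh hIy, fun hh => absurd hh (by omega)⟩)
      · intro hIy
        refine Or.inr ⟨?_, hlt⟩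
        intro hsS
        have := (hmemS.mp hsS).mp hIy
        omega
  exact ⟨S, hstab, ⟨hbijS, hcycS⟩, hdelta⟩

/-- for a fixed combinatorial map `(σ,α)` rooted at `r`, the
assignment `S ↦ Δ((σ,α),S)` (recording an orientation by its ingoing set `I`, the
outgoing set being `Iᶜ`) is a bijection from the set of `α`-stable subsets whose motion
function is cyclic (covered maps) onto the set of left-connected orientations. -/
theorem delta_bijection {H : Type*} [Fintype H] [Nonempty H]
    (σ α : Equiv.Perm H) (hmap : IsCombMap σ α) (r : H) :
    Set.BijOn (fun S => deltaI σ α S r)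
      {S : Set H | (∀ s ∈ S, α s ∈ S) ∧ IsCyclicFun (motion σ α S)}
      {I : Set H | α '' I = Iᶜ ∧
        ∀ h : H, ∃ q : ℕ, 0 < q ∧ (backward σ α I)^[q] h = r} := by
  classical
  obtain ⟨hα1, hα2, -⟩ := hmap
  refine ⟨?_, ?_, ?_⟩
  · rintro S ⟨hS, hcycfun⟩
    exact ⟨deltaI_orientation σ α S r hα1 hα2 hS hcycfun.2,
      fun h => deltaI_left_connected σ α S r hα1 hα2 hS hcycfun.1 hcycfun.2 h⟩
  · rintro S ⟨hS, hcycfun⟩ S' ⟨hS', hcycfun'⟩ heq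
    exact delta_inj σ α S S' r hα1 hcycfun.1 hcycfun.2 hcycfun'.1 hcycfun'.2 heq
  · rintro I ⟨himg, hconn⟩
    have hI : ∀ h, h ∈ I ↔ α h ∉ I := by
      intro h
      constructor
      · intro hh hc
        have h2 : α (α h) ∈ α '' I := ⟨α h, hc, rfl⟩
        rw [himg, hα2] at h2
        exact h2 hh
      · intro hh
        have h2 : α h ∈ Iᶜ := hh
        rw [← himg] at h2
        obtain ⟨y, hy, hye⟩ := h2
        have h3 : y = h := by rw [← hα2 y, hye, hα2]
        rwa [← h3]
    obtain ⟨S, hstab, hcycS, hdelta⟩ := delta_surj σ α r hα2 I hI hconn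
    exact ⟨S, ⟨hstab, hcycS⟩, hdelta⟩
end

section
/- Let (σ, α) be a combinatorial map on a nonempty finite set H rooted at r, with a left-connected orientation (I, O). Then every orbit of σ on H not containing r contains an element of I, and every orbit of σ∘α on H not containing r contains an element of O. (In words: every non-root vertex is incident to an ingoing half-edge, and every non-root face is incident to an outgoing half-edge.) -/
/-- in a left-connected orientation, every orbit of `σ` (vertex) not
containing the root contains an ingoing half-edge, and every orbit of `σ∘α` (face) not
containing the root contains an outgoing half-edge. -/
theorem nonroot_vertex_has_ingoing {H : Type*} [Fintype H] [Nonempty H]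
    (σ α : Equiv.Perm H) (hmap : IsCombMap σ α) (r : H) (I O : Set H)
    (hpart : I ∪ O = Set.univ) (hdisj : I ∩ O = ∅) (hIO : α '' I = O)
    (hlc : ∀ h : H, ∃ q : ℕ, 0 < q ∧ (backward σ α I)^[q] h = r) :
    (∀ x : H, ¬ σ.SameCycle x r → ∃ y ∈ I, σ.SameCycle x y) ∧
    (∀ x : H, ¬ (σ * α).SameCycle x r → ∃ y ∈ O, (σ * α).SameCycle x y) := by
  classical
  constructor
  · intro x hx
    by_contra hne
    push_neg at hne
    have hall : ∀ y, σ.SameCycle x y → y ∉ I := fun y hy hyI => hne y hyI hy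
    have key : ∀ n, σ.SameCycle x ((backward σ α I)^[n] x) := by
      intro n
      induction n with
      | zero => exact Equiv.Perm.SameCycle.refl _ _
      | succ n ih =>
        rw [Function.iterate_succ_apply']
        have hnI : (backward σ α I)^[n] x ∉ I := hall _ ih
        rw [backward, if_neg hnI]
        exact Equiv.Perm.sameCycle_apply_right.mpr ih
    obtain ⟨q, -, hq⟩ := hlc x
    exact hx (hq ▸ key q)
  · intro x hx
    by_contra hne
    push_neg at hne
    have hall : ∀ y, (σ * α).SameCycle x y → y ∈ I := by
      intro y hy
      have hmem : y ∈ I ∪ O := hpart ▸ Set.mem_univ y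
      rcases hmem with h | h
      · exact h
      · exact absurd hy (fun hc => hne y h hc)
    have key : ∀ n, (σ * α).SameCycle x ((backward σ α I)^[n] x) := by
      intro n
      induction n with
      | zero => exact Equiv.Perm.SameCycle.refl _ _
      | succ n ih =>
        rw [Function.iterate_succ_apply']
        have hnI : (backward σ α I)^[n] x ∈ I := hall _ ih
        rw [backward, if_pos hnI]
        have : σ (α ((backward σ α I)^[n] x)) = (σ * α) ((backward σ α I)^[n] x) :=
          (Equiv.Perm.mul_apply σ α _).symm
        rw [this]
        exact Equiv.Perm.sameCycle_apply_right.mpr ih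
    obtain ⟨q, -, hq⟩ := hlc x
    exact hx (hq ▸ key q)
end

section
/- Let (σ, α) be a combinatorial map on a finite set H with |H| = 2n (n ≥ 1), rooted at r, with a left-connected orientation (I, O); with the notation of the unfolding construction, let ψ = π∘α' (the face-permutation of the mobile) and ϕ' = (i,o)∘τ'∘α'. Then for every h ∈ I', the first-return restriction satisfies (ψ⁻¹)_{|I'}(h) = α'(ϕ'_{|O'}(α'(h))); that is, ψ⁻¹_{|I'} = α'∘ϕ'_{|O'}∘α' as permutations of I'. -/
/-- `H' = H ⊕ Bool`, where `i = Sum.inr true` and `o = Sum.inr false` are the two new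
half-edges. The extended edge-involution `α'` acts as `α` on `H` and swaps `i` and `o`. -/
def alphaExt {H : Type*} (α : Equiv.Perm H) : Equiv.Perm (H ⊕ Bool) :=
  Equiv.sumCongr α (Equiv.swap true false)

/-- The extended vertex-permutation `σ'` of the unfolding construction: `σ' i = r`,
`σ' (σ⁻¹ r) = i`, `σ' o = o` and `σ' = σ` elsewhere. -/
noncomputable def sigmaExt {H : Type*} (σ : Equiv.Perm H) (r : H) :
    Equiv.Perm (H ⊕ Bool) := by
  classical
  exact Equiv.sumCongr σ (1 : Equiv.Perm Bool) *
    Equiv.swap (Sum.inr true) (Sum.inl (σ⁻¹ r))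

/-!
With `ψ⁻¹ = α' ∘ π_• ∘ π_∘⁻¹`, a point `h ∈ I'` goes to `x = π_∘⁻¹ h ∈ I'`, which `π_•` fixes, so
`ψ⁻¹ h = α' x ∈ O'` and the next step `α' (π_• (α' x))` is back in `I'`: the first return of `ψ⁻¹`
is `α' (π_• (α' x))`. On the other side, `ϕ'` and `(i,o) ∘ σ' ∘ α'` agree outside `O'` (there `α'`
lands outside `I'`, where `π_∘⁻¹` is the identity) and send `α' h`, resp. `α' x`, to the same point,
so their first returns to `O'` from these two points coincide; the latter is `π_• (α' x)`.
-/

open Function Equiv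

section restrictFun

variable {X : Type*} {f g : X → X} {S : Set X} {x y : X}

lemma restrictFun_of_notMem (hx : x ∉ S) : restrictFun f S x = x := by
  classical
  rw [restrictFun, dif_neg fun h => hx h.1]

lemma restrictFun_eq_iterate_of_min (hx : x ∈ S) {k : ℕ} (hk : 0 < k) (hkS : f^[k] x ∈ S)
    (hmin : ∀ j, 0 < j → j < k → f^[j] x ∉ S) :
    restrictFun f S x = f^[k] x := by
  classical
  have hex : x ∈ S ∧ ∃ m : ℕ, 0 < m ∧ f^[m] x ∈ S := ⟨hx, k, hk, hkS⟩
  rw [restrictFun, dif_pos hex, (Nat.find_eq_iff hex.2).mpr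
    ⟨⟨hk, hkS⟩, fun j hjk hj => hmin j hj.1 hjk hj.2⟩]

lemma exists_restrictFun_eq_iterate (hx : x ∈ S) (hex : ∃ k, 0 < k ∧ f^[k] x ∈ S) :
    ∃ m, 0 < m ∧ f^[m] x ∈ S ∧ (∀ j, 0 < j → j < m → f^[j] x ∉ S) ∧
      restrictFun f S x = f^[m] x := by
  classical
  obtain ⟨hm, hmS⟩ := Nat.find_spec hex
  have hmin : ∀ j, 0 < j → j < Nat.find hex → f^[j] x ∉ S :=
    fun j hj hjm hjS => Nat.find_min hex hjm ⟨hj, hjS⟩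
  exact ⟨_, hm, hmS, hmin, restrictFun_eq_iterate_of_min hx hm hmS hmin⟩

lemma restrictFun_mem_of_mem_periodicPts (hx : x ∈ S) (hper : x ∈ periodicPts f) :
    restrictFun f S x ∈ S := by
  obtain ⟨k, hk, hkx⟩ := hper
  obtain ⟨m, -, hmS, -, hm⟩ := exists_restrictFun_eq_iterate hx ⟨k, hk, hkx.eq.symm ▸ hx⟩
  exact hm ▸ hmS

lemma restrictFun_eq_apply_apply (hx : x ∈ S) (h₁ : f x ∉ S) (h₂ : f (f x) ∈ S) :
    restrictFun f S x = f (f x) :=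
  restrictFun_eq_iterate_of_min (k := 2) hx two_pos h₂ fun j hj hj2 => by
    obtain rfl : j = 1 := by omega
    exact h₁

lemma iterate_eq_of_eqOn_compl (hfg : ∀ z ∉ S, f z = g z) :
    ∀ k, (∀ j < k, g^[j] x ∉ S) → f^[k] x = g^[k] x
  | 0, _ => rfl
  | k + 1, hk => by
    rw [iterate_succ_apply', iterate_succ_apply',
      iterate_eq_of_eqOn_compl hfg k fun j hj => hk j (by omega), hfg _ (hk k (by omega))]

lemma restrictFun_eq_of_apply_eq_of_eqOn_compl (hx : x ∈ S) (hy : y ∈ S) (hxy : f x = g y)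
    (hfg : ∀ z ∉ S, f z = g z) (hper : y ∈ periodicPts g) :
    restrictFun f S x = restrictFun g S y := by
  obtain ⟨k, hk, hky⟩ := hper
  obtain ⟨m, hm, hmS, hmin, hgm⟩ := exists_restrictFun_eq_iterate hy ⟨k, hk, hky.eq.symm ▸ hy⟩
  have hiter : ∀ j, 0 < j → j ≤ m → f^[j] x = g^[j] y := by
    rintro (_ | j) hj hjm
    · omega
    rw [iterate_succ_apply, iterate_succ_apply, hxy]
    exact iterate_eq_of_eqOn_compl hfg j fun i hi => by
      rw [← iterate_succ_apply]
      exact hmin (i + 1) (by omega) (by omega)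
  rw [hgm, ← hiter m hm le_rfl]
  refine restrictFun_eq_iterate_of_min hx hm (hiter m hm le_rfl ▸ hmS) fun j hj hjm => ?_
  rw [hiter j hj hjm.le]
  exact hmin j hj hjm

end restrictFun

theorem restrictFun_inv_eq_conj_restrictFun_compl {X : Type*} [Finite X] {S : Set X}
    {A P Q g : Perm X} (hA : Involutive A) (hAS : ∀ x, A x ∈ S ↔ x ∉ S)
    (hP : ∀ x ∉ S, P x = x) (hQ : ⇑Q = restrictFun ⇑(g * A) Sᶜ) {h : X} (hh : h ∈ S) :
    restrictFun ⇑(P * Q⁻¹ * A)⁻¹ S h = A (restrictFun ⇑(g * P⁻¹ * A) Sᶜ (A h)) := by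
  have hPinv : ∀ x ∉ S, P⁻¹ x = x := fun x hx => Perm.inv_eq_iff_eq.mpr (hP x hx).symm
  have hPinv_mem : ∀ x ∈ S, P⁻¹ x ∈ S := fun x hx => by
    by_contra hx'
    have hfix : P⁻¹ x = x := (hP _ hx').symm.trans (P.apply_symm_apply x)
    rw [hfix] at hx'
    exact hx' hx
  have hAinv : ∀ x, A⁻¹ x = A x := fun x => Perm.inv_eq_iff_eq.mpr (hA x).symm
  have hQS : ∀ x ∈ S, Q x = x := fun x hx => by
    rw [hQ]
    exact restrictFun_of_notMem (Set.notMem_compl_iff.mpr hx)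
  have hψ : ∀ z, (P * Q⁻¹ * A)⁻¹ z = A (Q (P⁻¹ z)) := fun z => by
    simp only [mul_inv_rev, inv_inv, Perm.mul_apply, hAinv]
  set x := P⁻¹ h
  have hxS : x ∈ S := hPinv_mem h hh
  have hAx : A x ∈ Sᶜ := fun hAx => (hAS x).mp hAx hxS
  have hQAx : Q (A x) ∈ Sᶜ := by
    rw [hQ]
    exact restrictFun_mem_of_mem_periodicPts hAx ((Equiv.injective _).mem_periodicPts _)
  have hlhs : restrictFun ⇑(P * Q⁻¹ * A)⁻¹ S h = A (Q (A x)) := by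
    have h₁ : (P * Q⁻¹ * A)⁻¹ h = A x := by rw [hψ, hQS x hxS]
    have h₂ : (P * Q⁻¹ * A)⁻¹ (A x) = A (Q (A x)) := by rw [hψ, hPinv _ hAx]
    rw [restrictFun_eq_apply_apply hh (h₁ ▸ hAx) (by rw [h₁, h₂]; exact (hAS _).mpr hQAx), h₁, h₂]
  have hrhs : restrictFun ⇑(g * P⁻¹ * A) Sᶜ (A h) = Q (A x) := by
    rw [hQ]
    refine restrictFun_eq_of_apply_eq_of_eqOn_compl (fun hAh => (hAS h).mp hAh hh) hAx ?_ ?_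
      ((Equiv.injective _).mem_periodicPts _)
    · simp only [Perm.mul_apply, hA _, x]
    · intro z hz
      simp only [Perm.mul_apply, hPinv _ fun hAz => (hAS z).mp hAz (Set.notMem_compl_iff.mp hz)]
  rw [hlhs, hrhs]

section unfolding

variable {H : Type*} {α : Perm H} {I : Set H}

lemma compl_inl_image_union_inr_true :
    (Sum.inl '' I ∪ {Sum.inr true} : Set (H ⊕ Bool))ᶜ = Sum.inl '' Iᶜ ∪ {Sum.inr false} := by
  ext (a | (_ | _)) <;> simp

lemma alphaExt_involutive (hα : Involutive α) : Involutive (alphaExt α) := by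
  rintro (a | b)
  · simp [alphaExt, hα a]
  · cases b <;> simp [alphaExt]

lemma alphaExt_mem_inl_image_union_inr_true (hα : Involutive α) (hIO : α '' I = Iᶜ)
    (x : H ⊕ Bool) :
    alphaExt α x ∈ (Sum.inl '' I ∪ {Sum.inr true} : Set (H ⊕ Bool)) ↔
      x ∉ (Sum.inl '' I ∪ {Sum.inr true} : Set (H ⊕ Bool)) := by
  have hαI : ∀ a, α a ∈ I ↔ a ∉ I := fun a => by
    rw [← Set.mem_compl_iff, ← hIO, hα.image_eq_preimage_symm, Set.mem_preimage]
  rcases x with a | (_ | _) <;> simp [alphaExt, hαI]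

end unfolding

theorem mobile_face_vs_tree_face_general {H : Type*} [Fintype H] [DecidableEq H]
    (σ α : Equiv.Perm H) (hmap : IsCombMap σ α) (r : H) (I O : Set H)
    (hpart : I ∪ O = Set.univ) (hdisj : I ∩ O = ∅) (hIO : α '' I = O)
    (πo : Equiv.Perm (H ⊕ Bool))
    (hπo : ⇑πo = restrictFun (⇑(sigmaExt σ r))
      (Sum.inl '' I ∪ {Sum.inr true}))
    (πb : Equiv.Perm (H ⊕ Bool))
    (hπb : ⇑πb = restrictFun
      (⇑(Equiv.swap (Sum.inr true : H ⊕ Bool) (Sum.inr false) * sigmaExt σ r * alphaExt α))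
      (Sum.inl '' O ∪ {Sum.inr false})) :
    ∀ h ∈ (Sum.inl '' I ∪ {Sum.inr true} : Set (H ⊕ Bool)),
      restrictFun (⇑(πo * πb⁻¹ * alphaExt α)⁻¹) (Sum.inl '' I ∪ {Sum.inr true}) h =
        alphaExt α (restrictFun
          (⇑(Equiv.swap (Sum.inr true : H ⊕ Bool) (Sum.inr false) *
              (sigmaExt σ r * πo⁻¹) * alphaExt α))
          (Sum.inl '' O ∪ {Sum.inr false}) (alphaExt α h)) := by
  have hα : Involutive α := hmap.2.1
  obtain rfl : O = Iᶜ :=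
    (IsCompl.compl_eq ⟨Set.disjoint_iff_inter_eq_empty.mpr hdisj, codisjoint_iff.mpr hpart⟩).symm
  rw [← compl_inl_image_union_inr_true] at hπb ⊢
  intro h hh
  rw [← mul_assoc]
  exact restrictFun_inv_eq_conj_restrictFun_compl (alphaExt_involutive hα)
    (alphaExt_mem_inl_image_union_inr_true hα hIO)
    (fun x hx => by rw [hπo]; exact restrictFun_of_notMem hx) hπb hh

/-- with the notation of the unfolding construction, the
face-permutation `ψ = π∘α'` of the mobile and the permutation `ϕ' = (i,o)∘τ'∘α'`
(where `τ' = σ'∘π_∘⁻¹`) satisfy `ψ⁻¹_{|I'} = α'∘ϕ'_{|O'}∘α'` on `I'`. -/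
theorem mobile_face_vs_tree_face {H : Type*} [Fintype H] [DecidableEq H]
    (n : ℕ) (hn : 1 ≤ n) (hcard : Fintype.card H = 2 * n)
    (σ α : Equiv.Perm H) (hmap : IsCombMap σ α) (r : H) (I O : Set H)
    (hpart : I ∪ O = Set.univ) (hdisj : I ∩ O = ∅) (hIO : α '' I = O)
    (hlc : ∀ h : H, ∃ q : ℕ, 0 < q ∧ (backward σ α I)^[q] h = r)
    (πo : Equiv.Perm (H ⊕ Bool))
    (hπo : ⇑πo = restrictFun (⇑(sigmaExt σ r))
      (Sum.inl '' I ∪ {Sum.inr true}))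
    (πb : Equiv.Perm (H ⊕ Bool))
    (hπb : ⇑πb = restrictFun
      (⇑(Equiv.swap (Sum.inr true : H ⊕ Bool) (Sum.inr false) * sigmaExt σ r * alphaExt α))
      (Sum.inl '' O ∪ {Sum.inr false})) :
    ∀ h ∈ (Sum.inl '' I ∪ {Sum.inr true} : Set (H ⊕ Bool)),
      restrictFun (⇑(πo * πb⁻¹ * alphaExt α)⁻¹) (Sum.inl '' I ∪ {Sum.inr true}) h =
        alphaExt α (restrictFun
          (⇑(Equiv.swap (Sum.inr true : H ⊕ Bool) (Sum.inr false) *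
              (sigmaExt σ r * πo⁻¹) * alphaExt α))
          (Sum.inl '' O ∪ {Sum.inr false}) (alphaExt α h)) :=
  mobile_face_vs_tree_face_general σ α hmap r I O hpart hdisj hIO πo hπo πb hπb
end
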